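/- arXiv:2511.00332 — 13 statements merged into one kernel-verified Lean document; each statement's English description precedes it below -/
import Mathlib

section
/- Let α ∈ ℝ and let a, b be nonzero complex numbers. The spectrum of the bounded self-adjoint operator H₀ on ℓ²(ℤ;ℂ²) is exactly the set of real numbers t with √(α²+(|a|−|b|)²) ≤ |t| ≤ √(α²+(|a|+|b|)²); that is, σ(H₀) = [−√(α²+(|a|+|b|)²), −√(α²+(|a|−|b|)²)] ∪ [√(α²+(|a|−|b|)²), √(α²+(|a|+|b|)²)], viewed as a subset of ℂ. -/
/-!
`H₀` is self-adjoint, so its spectrum is real. Squaring gives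
`H₀² = (α² + |a|² + |b|²) + ā b S₋₁ + a b̄ S₁` with `S_k` the shifts, so
`‖H₀² - (α² + |a|² + |b|²)‖ ≤ 2|a||b|`, which confines `t²` to
`[α² + (|a| - |b|)², α² + (|a| + |b|)²]` for every `t ∈ σ(H₀)`.

Conversely, for such `t` choose `ξ` on the unit circle with `|a + bξ|² = t² - α²` and an
eigenvector `v` of the Hermitian symbol `[[α, conj (a + bξ)], [a + bξ, -α]]` for the eigenvalue
`t`. The plane wave `n ↦ ξ̄ⁿ v` solves `H₀ψ = tψ` pointwise; its truncations to `[-N, N]` have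
norm `√(2N+1) ‖v‖` and a defect `H₀ψ_N - tψ_N` living on the four sites next to the cut,
so `t` is an approximate eigenvalue.
-/

open Complex
open scoped InnerProductSpace ENNReal ComplexConjugate

section Shift

variable {E : Type*} [NormedAddCommGroup E] {p : ℝ≥0∞}

lemma Memℓp.comp_add_right {f : ℤ → E} (hf : Memℓp f p) (k : ℤ) :
    Memℓp (fun n => f (n + k)) p := by
  rcases p.trichotomy with rfl | rfl | hp
  · rw [memℓp_zero_iff] at hf ⊢
    exact hf.preimage (add_left_injective k).injOn
  · rw [memℓp_infty_iff] at hf ⊢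
    exact hf.mono (Set.range_comp_subset_range (· + k) fun n => ‖f n‖)
  · rw [memℓp_gen_iff hp] at hf ⊢
    exact (Equiv.addRight k).summable_iff.2 hf

def lpShift (k : ℤ) (u : lp (fun _ : ℤ => E) p) : lp (fun _ : ℤ => E) p :=
  ⟨fun n => u (n + k), (lp.memℓp u).comp_add_right k⟩

@[simp] lemma lpShift_apply (k : ℤ) (u : lp (fun _ : ℤ => E) p) (n : ℤ) :
    lpShift k u n = u (n + k) := rfl

lemma norm_lpShift (hp : 0 < p.toReal) (k : ℤ) (u : lp (fun _ : ℤ => E) p) :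
    ‖lpShift k u‖ = ‖u‖ := by
  rw [lp.norm_eq_tsum_rpow hp, lp.norm_eq_tsum_rpow hp]
  congr 1
  exact (Equiv.addRight k).tsum_eq fun n => ‖u n‖ ^ p.toReal

end Shift

lemma tsum_sub_comp_add_right {G : Type*} [AddCommGroup G] [TopologicalSpace G]
    [IsTopologicalAddGroup G] [T2Space G] {f : ℤ → G} (hf : Summable f) (k : ℤ) :
    ∑' n, (f n - f (n + k)) = 0 := by
  have hfk : Summable fun n => f (n + k) := (Equiv.addRight k).summable_iff.2 hf
  rw [hf.tsum_sub hfk, sub_eq_zero]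
  exact ((Equiv.addRight k).tsum_eq f).symm

lemma IsSelfAdjoint.exists_eq_ofReal_abs_sq_sub_le {A : Type*} [CStarAlgebra A] {x : A}
    (hx : IsSelfAdjoint x) (c : ℝ) {z : ℂ} (hz : z ∈ spectrum ℂ x) :
    ∃ t : ℝ, z = t ∧ |t ^ 2 - c| ≤ ‖x ^ 2 - algebraMap ℂ A c‖ := by
  obtain _ | _ := subsingleton_or_nontrivial A
  · simp [spectrum.of_subsingleton] at hz
  refine ⟨z.re, hx.mem_spectrum_eq_re hz, ?_⟩
  have hsq : (z.re : ℂ) ^ 2 - c ∈ spectrum ℂ (x ^ 2 - algebraMap ℂ A c) := by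
    rw [← spectrum.sub_singleton_eq, spectrum.map_pow_of_pos x two_pos]
    exact Set.sub_mem_sub ⟨z, hz, by rw [← hx.mem_spectrum_eq_re hz]⟩ rfl
  simpa [← Complex.ofReal_pow, ← Complex.ofReal_sub, Complex.norm_real] using
    spectrum.norm_le_norm_of_mem hsq

lemma sqrt_le_abs_le_sqrt_iff (α A B t : ℝ) :
    (Real.sqrt (α ^ 2 + (A - B) ^ 2) ≤ |t| ∧ |t| ≤ Real.sqrt (α ^ 2 + (A + B) ^ 2)) ↔
      |t ^ 2 - (α ^ 2 + A ^ 2 + B ^ 2)| ≤ 2 * A * B := by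
  rw [← Real.sqrt_sq_eq_abs, Real.sqrt_le_sqrt_iff (sq_nonneg t),
    Real.sqrt_le_sqrt_iff (by positivity), abs_le]
  constructor <;> rintro ⟨h₁, h₂⟩ <;> constructor <;> nlinarith

lemma mem_spectrum_of_forall_exists_norm_sub_smul_lt {𝕜 X : Type*} [NontriviallyNormedField 𝕜]
    [NormedAddCommGroup X] [NormedSpace 𝕜 X] (T : X →L[𝕜] X) (t : 𝕜)
    (h : ∀ ε > 0, ∃ u, ‖T u - t • u‖ < ε * ‖u‖) : t ∈ spectrum 𝕜 T := by
  rintro ⟨U, hU⟩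
  set R : X →L[𝕜] X := ↑U⁻¹
  obtain ⟨u, hu⟩ := h (‖R‖ + 1)⁻¹ (by positivity)
  have hUu : ‖(U : X →L[𝕜] X) u‖ = ‖T u - t • u‖ := by
    rw [hU, sub_apply, Algebra.algebraMap_eq_smul_one, smul_apply, one_apply_eq_self, norm_sub_rev]
  have hRU : R ((U : X →L[𝕜] X) u) = u := by
    rw [← mul_apply_eq_comp, U.inv_mul, one_apply_eq_self]
  have := calc ‖u‖ = ‖R ((U : X →L[𝕜] X) u)‖ := by rw [hRU]
    _ ≤ ‖R‖ * ‖(U : X →L[𝕜] X) u‖ := R.le_opNorm _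
    _ ≤ ‖R‖ * ((‖R‖ + 1)⁻¹ * ‖u‖) := by rw [hUu]; gcongr
    _ < (‖R‖ + 1) * ((‖R‖ + 1)⁻¹ * ‖u‖) :=
      mul_lt_mul_of_pos_right (by linarith) ((norm_nonneg _).trans_lt hu)
    _ = ‖u‖ := by field_simp
  exact this.false

lemma exists_norm_eq_one_norm_add_mul_eq {a b : ℂ} (ha : a ≠ 0) (hb : b ≠ 0) {r : ℝ}
    (hr₁ : |‖a‖ - ‖b‖| ≤ r) (hr₂ : r ≤ ‖a‖ + ‖b‖) :
    ∃ ξ : ℂ, ‖ξ‖ = 1 ∧ ‖a + b * ξ‖ = r := by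
  set q : ℝ := ‖b‖ / ‖a‖
  -- `b * ξ₀` points in the direction of `a`
  set ξ₀ : ℂ := a / b * q
  have hξ₀ : ‖ξ₀‖ = 1 := by
    simp [ξ₀, q]
    field_simp
  have hvalue : ∀ s : ℝ, ‖a + b * (s * ξ₀)‖ = |‖a‖ + s * ‖b‖| := by
    intro s
    have : a + b * (s * ξ₀) = a * ((1 + s * q : ℝ) : ℂ) := by
      simp only [ξ₀]; push_cast; field_simp
    rw [this, norm_mul, Complex.norm_real, Real.norm_eq_abs, ← abs_norm, ← abs_mul]
    congr 1
    simp only [q, abs_norm]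
    field_simp
  have hsphere : IsPreconnected (Metric.sphere (0 : ℂ) 1) :=
    (isConnected_sphere (by simp [rank_real_complex]) 0 zero_le_one).isPreconnected
  have hmem : ∀ s : ℝ, |s| = 1 → (s : ℂ) * ξ₀ ∈ Metric.sphere (0 : ℂ) 1 := by
    intro s hs; simp [hs, hξ₀]
  have hr : r ∈ Set.Icc ‖a + b * ((-1 : ℝ) * ξ₀)‖ ‖a + b * ((1 : ℝ) * ξ₀)‖ := by
    rw [hvalue, hvalue, neg_one_mul, ← sub_eq_add_neg, one_mul,
      abs_of_nonneg (by positivity : 0 ≤ ‖a‖ + ‖b‖)]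
    exact ⟨hr₁, hr₂⟩
  obtain ⟨ξ, hξ, hξr⟩ := hsphere.intermediate_value (hmem (-1) (by simp)) (hmem 1 (by simp))
    (f := fun ξ => ‖a + b * ξ‖) (by fun_prop) hr
  exact ⟨ξ, by simpa using hξ, hξr⟩

lemma exists_eigenvector_of_norm_sq_eq (α t : ℝ) (c : ℂ) (hc : ‖c‖ ^ 2 = t ^ 2 - α ^ 2) :
    ∃ v : EuclideanSpace ℂ (Fin 2), v ≠ 0 ∧
      (α : ℂ) * v 0 + conj c * v 1 = t * v 0 ∧ c * v 0 - (α : ℂ) * v 1 = t * v 1 := by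
  have hcc : conj c * c = ((t : ℂ) - α) * (t + α) := by
    rw [Complex.conj_mul', ← Complex.ofReal_pow, hc]; push_cast; ring
  by_cases ht : (t : ℂ) = α
  · have hc0 : c = 0 := by simpa [ht] using hcc
    refine ⟨!₂[1, 0], fun h => ?_, by simp [ht, hc0], by simp [hc0]⟩
    simpa using congrArg (fun v : EuclideanSpace ℂ (Fin 2) => v 0) h
  · refine ⟨!₂[conj c, t - α], fun h => ht ?_, by simp; ring, by simp; linear_combination hcc⟩
    simpa [sub_eq_zero] using congrArg (fun v : EuclideanSpace ℂ (Fin 2) => v 1) h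

lemma lp.norm_sq_le_card_mul {ι E : Type*} [NormedAddCommGroup E] (f : lp (fun _ : ι => E) 2)
    (s : Finset ι) (hs : ∀ i ∉ s, f i = 0) (M : ℝ) (hM : ∀ i ∈ s, ‖f i‖ ^ 2 ≤ M) :
    ‖f‖ ^ 2 ≤ s.card * M := by
  have h := lp.norm_rpow_eq_tsum (p := 2) (by norm_num) f
  simp only [ENNReal.toReal_ofNat, Real.rpow_two] at h
  rw [h, tsum_eq_sum fun i hi => by simp [hs i hi]]
  simpa using Finset.sum_le_card_nsmul s _ M hM

noncomputable def truncatedPower (θ : ℂ) (N : ℕ) (n : ℤ) : ℂ :=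
  if -(N : ℤ) ≤ n ∧ n ≤ N then θ ^ n else 0

lemma truncatedPower_add_one_eq_mul {θ : ℂ} (hθ : θ ≠ 0) {N : ℕ} {m : ℤ} (hm₁ : m ≠ -N - 1)
    (hm₂ : m ≠ N) : truncatedPower θ N (m + 1) = θ * truncatedPower θ N m := by
  simp only [truncatedPower]
  split_ifs <;> first | omega | simp [zpow_add_one₀ hθ, mul_comm]

lemma norm_truncatedPower_add_one_sub_mul_le {θ : ℂ} (hθ : ‖θ‖ = 1) (N : ℕ) (m : ℤ) :
    ‖truncatedPower θ N (m + 1) - θ * truncatedPower θ N m‖ ≤ 1 := by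
  have hθ0 : θ ≠ 0 := norm_ne_zero_iff.1 (by simp [hθ])
  simp only [truncatedPower]
  split_ifs <;> simp [zpow_add_one₀ hθ0, mul_comm, norm_zpow, hθ]

section TruncatedWave

variable {E : Type*} [NormedAddCommGroup E] [NormedSpace ℂ E]

noncomputable def truncatedWave (θ : ℂ) (v : E) (N : ℕ) : lp (fun _ : ℤ => E) 2 :=
  ∑ n ∈ Finset.Icc (-N : ℤ) N, lp.single 2 n (θ ^ n • v)

lemma truncatedWave_apply (θ : ℂ) (v : E) (N : ℕ) (n : ℤ) :
    truncatedWave θ v N n = truncatedPower θ N n • v := by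
  simp only [truncatedWave, truncatedPower, lp.coeFn_sum, lp.coeFn_single, Finset.sum_apply,
    Finset.sum_pi_single, Finset.mem_Icc]
  split_ifs <;> simp

lemma norm_truncatedWave_sq {θ : ℂ} (hθ : ‖θ‖ = 1) (v : E) (N : ℕ) :
    ‖truncatedWave θ v N‖ ^ 2 = (2 * N + 1) * ‖v‖ ^ 2 := by
  have h := lp.norm_sum_single (p := 2) (by norm_num) (fun n : ℤ => θ ^ n • v)
    (Finset.Icc (-N : ℤ) N)
  simp only [ENNReal.toReal_ofNat, Real.rpow_two, norm_smul, norm_zpow, hθ, one_zpow,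
    one_mul, Finset.sum_const, Int.card_Icc, nsmul_eq_mul] at h
  rw [truncatedWave, h]
  congr 1
  rw [show N + 1 - -(N : ℤ) = ((2 * N + 1 : ℕ) : ℤ) by push_cast; ring, Int.toNat_natCast]
  push_cast; ring

end TruncatedWave

lemma summable_conj_mul_shift {ι : Type*} [Fintype ι]
    (u w : lp (fun _ : ℤ => EuclideanSpace ℂ ι) 2) (k : ℤ) (i j : ι) :
    Summable fun n => conj (u (n + k) i) * w n j := by
  have hHolder : (2 : ℝ≥0∞).toReal.HolderConjugate (2 : ℝ≥0∞).toReal := by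
    simpa using Real.HolderConjugate.two_two
  refine Summable.of_norm_bounded (lp.summable_mul hHolder (lpShift k u) w) fun n => ?_
  rw [norm_mul, Complex.norm_conj]
  exact mul_le_mul (PiLp.norm_apply_le _ i) (PiLp.norm_apply_le _ j) (norm_nonneg _)
    (norm_nonneg _)

local notation "𝓗" => lp (fun _ : ℤ => EuclideanSpace ℂ (Fin 2)) 2

lemma inner_euclideanSpace_fin_two (x y : EuclideanSpace ℂ (Fin 2)) :
    ⟪x, y⟫_ℂ = conj (x 0) * y 0 + conj (x 1) * y 1 := by
  simp [PiLp.inner_apply, Fin.sum_univ_two, mul_comm]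

def IsFreeDifferenceOperator (α : ℝ) (a b : ℂ) (H : 𝓗 →L[ℂ] 𝓗) : Prop :=
  ∀ (u : 𝓗) (n : ℤ),
    H u n 0 = (α : ℂ) * u n 0 + conj a * u n 1 + conj b * u (n + 1) 1 ∧
    H u n 1 = a * u n 0 + b * u (n - 1) 0 - (α : ℂ) * u n 1

namespace IsFreeDifferenceOperator

variable {α : ℝ} {a b : ℂ} {H : 𝓗 →L[ℂ] 𝓗}

theorem isSelfAdjoint (hH : IsFreeDifferenceOperator α a b H) : IsSelfAdjoint H := by
  rw [ContinuousLinearMap.isSelfAdjoint_iff_isSymmetric]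
  intro u w
  set X : ℤ → ℂ := fun n => b * (conj (u (n + 1) 1) * w n 0)
  set Y : ℤ → ℂ := fun n => conj b * (conj (u (n - 1) 0) * w n 1)
  have hX : Summable X := (summable_conj_mul_shift u w 1 1 0).mul_left b
  have hY : Summable Y := (summable_conj_mul_shift u w (-1) 0 1).mul_left (conj b)
  -- the on-site terms cancel, the hopping terms telescope
  have hpointwise : ∀ n, ⟪H u n, w n⟫_ℂ - ⟪u n, H w n⟫_ℂ =
      (X n - X (n - 1)) + (Y n - Y (n + 1)) := by
    intro n
    simp only [X, Y, sub_add_cancel, add_sub_cancel_right]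
    simp only [inner_euclideanSpace_fin_two, (hH u n).1, (hH u n).2, (hH w n).1,
      (hH w n).2, map_add, map_sub, map_mul, Complex.conj_conj, Complex.conj_ofReal]
    ring
  have hXs : Summable fun n => X (n - 1) := hX.comp_injective (sub_left_injective (b := 1))
  have hYs : Summable fun n => Y (n + 1) := hY.comp_injective (add_left_injective 1)
  have hX' : ∑' n, (X n - X (n - 1)) = 0 := tsum_sub_comp_add_right hX (-1)
  have hY' : ∑' n, (Y n - Y (n + 1)) = 0 := tsum_sub_comp_add_right hY 1
  rw [ContinuousLinearMap.coe_coe, ← sub_eq_zero, lp.inner_eq_tsum, lp.inner_eq_tsum,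
    ← (lp.summable_inner (𝕜 := ℂ) _ _).tsum_sub (lp.summable_inner (𝕜 := ℂ) _ _),
    tsum_congr hpointwise, (hX.sub hXs).tsum_add (hY.sub hYs), hX', hY', add_zero]

theorem sq_apply (hH : IsFreeDifferenceOperator α a b H) (u : 𝓗) :
    (H ^ 2) u = ((α ^ 2 + ‖a‖ ^ 2 + ‖b‖ ^ 2 : ℝ) : ℂ) • u
      + (conj a * b) • lpShift (-1) u + (a * conj b) • lpShift 1 u := by
  have hnorm : ∀ z : ℂ, conj z * z = ((‖z‖ : ℝ) : ℂ) ^ 2 := Complex.conj_mul'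
  ext n i
  simp only [pow_two, mul_apply_eq_comp, lp.coeFn_add, lp.coeFn_smul, Pi.add_apply,
    Pi.smul_apply, PiLp.add_apply, PiLp.smul_apply, smul_eq_mul, lpShift_apply]
  revert i
  rw [Fin.forall_fin_two]
  constructor
  · rw [(hH _ n).1, (hH u n).1, (hH u n).2, (hH u (n + 1)).2, add_sub_cancel_right,
      ← sub_eq_add_neg]
    push_cast
    linear_combination (u n 0) * (hnorm a + hnorm b)
  · rw [(hH _ n).2, (hH u n).1, (hH u n).2, (hH u (n - 1)).1, sub_add_cancel,
      ← sub_eq_add_neg]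
    push_cast
    linear_combination (u n 1) * (hnorm a + hnorm b)

theorem norm_sq_sub_algebraMap_le (hH : IsFreeDifferenceOperator α a b H) :
    ‖H ^ 2 - algebraMap ℂ (𝓗 →L[ℂ] 𝓗) ((α ^ 2 + ‖a‖ ^ 2 + ‖b‖ ^ 2 : ℝ) : ℂ)‖
      ≤ 2 * ‖a‖ * ‖b‖ := by
  refine ContinuousLinearMap.opNorm_le_bound _ (by positivity) fun u => ?_
  have hshift : ∀ k : ℤ, ‖lpShift k u‖ = ‖u‖ := fun k => norm_lpShift (by norm_num) k u
  calc ‖(H ^ 2 - algebraMap ℂ (𝓗 →L[ℂ] 𝓗) ((α ^ 2 + ‖a‖ ^ 2 + ‖b‖ ^ 2 : ℝ) : ℂ)) u‖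
      = ‖(conj a * b) • lpShift (-1) u + (a * conj b) • lpShift 1 u‖ := by
        rw [sub_apply, hH.sq_apply, Algebra.algebraMap_eq_smul_one,
          smul_apply, one_apply_eq_self, add_assoc, add_sub_cancel_left]
    _ ≤ ‖a‖ * ‖b‖ * ‖u‖ + ‖a‖ * ‖b‖ * ‖u‖ := by
        refine (norm_add_le _ _).trans_eq ?_
        simp only [norm_smul, hshift, norm_mul, Complex.norm_conj]
    _ = 2 * ‖a‖ * ‖b‖ * ‖u‖ := by ring

theorem apply_truncatedWave_sub_smul (hH : IsFreeDifferenceOperator α a b H) {ξ : ℂ}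
    (hξ : ‖ξ‖ = 1) {t : ℝ} {v : EuclideanSpace ℂ (Fin 2)}
    (hv₀ : (α : ℂ) * v 0 + conj (a + b * ξ) * v 1 = t * v 0)
    (hv₁ : (a + b * ξ) * v 0 - (α : ℂ) * v 1 = t * v 1) (N : ℕ) (n : ℤ) :
    let φ := truncatedPower (conj ξ) N
    let u := truncatedWave (conj ξ) v N
    (H u - (t : ℂ) • u) n 0 = (φ (n + 1) - conj ξ * φ n) * (conj b * v 1) ∧
      (H u - (t : ℂ) • u) n 1 = -ξ * (φ n - conj ξ * φ (n - 1)) * (b * v 0) := by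
  intro φ u
  have hξξ : ξ * conj ξ = 1 := by rw [Complex.mul_conj', hξ]; simp
  have hu : ∀ m i, u m i = φ m * v i := fun m i => by
    simp [u, φ, truncatedWave_apply]
  simp only [lp.coeFn_sub, lp.coeFn_smul, Pi.sub_apply, Pi.smul_apply, PiLp.sub_apply,
    PiLp.smul_apply, smul_eq_mul]
  rw [(hH u n).1, (hH u n).2]
  simp only [hu]
  simp only [map_add, map_mul] at hv₀
  constructor
  · linear_combination φ n * hv₀
  · linear_combination φ n * hv₁ - φ (n - 1) * b * v 0 * hξξ

theorem norm_apply_truncatedWave_sub_smul_sq_le (hH : IsFreeDifferenceOperator α a b H)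
    {ξ : ℂ} (hξ : ‖ξ‖ = 1) {t : ℝ} {v : EuclideanSpace ℂ (Fin 2)}
    (hv₀ : (α : ℂ) * v 0 + conj (a + b * ξ) * v 1 = t * v 0)
    (hv₁ : (a + b * ξ) * v 0 - (α : ℂ) * v 1 = t * v 1) (N : ℕ) :
    ‖H (truncatedWave (conj ξ) v N) - (t : ℂ) • truncatedWave (conj ξ) v N‖ ^ 2
      ≤ 4 * (‖b‖ ^ 2 * ‖v‖ ^ 2) := by
  have hθ : ‖conj ξ‖ = 1 := by rw [Complex.norm_conj, hξ]
  have hθ0 : conj ξ ≠ 0 := norm_ne_zero_iff.1 (by rw [hθ]; exact one_ne_zero)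
  refine (lp.norm_sq_le_card_mul _ {-(N : ℤ) - 1, (N : ℤ), -(N : ℤ), (N : ℤ) + 1}
    (fun n hn => ?_) _ fun n _ => ?_).trans (by gcongr; exact_mod_cast Finset.card_le_four)
  · simp only [Finset.mem_insert, Finset.mem_singleton, not_or] at hn
    obtain ⟨h₁, h₂, h₃, h₄⟩ := hn
    obtain ⟨e₀, e₁⟩ := hH.apply_truncatedWave_sub_smul hξ hv₀ hv₁ N n
    have d₀ := truncatedPower_add_one_eq_mul hθ0 h₁ h₂
    have d₁ := truncatedPower_add_one_eq_mul hθ0 (N := N) (m := n - 1) (by omega) (by omega)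
    rw [sub_add_cancel] at d₁
    ext i
    revert i
    rw [Fin.forall_fin_two]
    exact ⟨by rw [e₀, d₀, sub_self, zero_mul]; rfl,
      by rw [e₁, d₁, sub_self, mul_zero, zero_mul]; rfl⟩
  · obtain ⟨e₀, e₁⟩ := hH.apply_truncatedWave_sub_smul hξ hv₀ hv₁ N n
    have d₀ := norm_truncatedPower_add_one_sub_mul_le hθ N n
    have d₁ := norm_truncatedPower_add_one_sub_mul_le hθ N (n - 1)
    rw [sub_add_cancel] at d₁
    rw [EuclideanSpace.norm_sq_eq, Fin.sum_univ_two, e₀, e₁, EuclideanSpace.norm_sq_eq,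
      Fin.sum_univ_two]
    simp only [norm_mul, norm_neg, hξ, Complex.norm_conj, one_mul, mul_pow]
    have hsmall : ∀ {x : ℂ} (y : ℝ), ‖x‖ ≤ 1 → ‖x‖ ^ 2 * y ^ 2 ≤ y ^ 2 := fun y hx =>
      mul_le_of_le_one_left (sq_nonneg y) (pow_le_one₀ (norm_nonneg _) hx)
    linarith [hsmall (‖b‖ * ‖v 1‖) d₀, hsmall (‖b‖ * ‖v 0‖) d₁]

theorem ofReal_mem_spectrum (hH : IsFreeDifferenceOperator α a b H) (ha : a ≠ 0) (hb : b ≠ 0)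
    {t : ℝ} (ht : |t ^ 2 - (α ^ 2 + ‖a‖ ^ 2 + ‖b‖ ^ 2)| ≤ 2 * ‖a‖ * ‖b‖) :
    (t : ℂ) ∈ spectrum ℂ H := by
  rw [abs_le] at ht
  have hr : 0 ≤ t ^ 2 - α ^ 2 := by nlinarith [sq_nonneg (‖a‖ - ‖b‖)]
  obtain ⟨ξ, hξ, hξr⟩ := exists_norm_eq_one_norm_add_mul_eq ha hb
    (r := Real.sqrt (t ^ 2 - α ^ 2)) (Real.abs_le_sqrt (by nlinarith))
    (Real.sqrt_le_iff.2 ⟨by positivity, by nlinarith⟩)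
  obtain ⟨v, hv, hv₀, hv₁⟩ := exists_eigenvector_of_norm_sq_eq α t (a + b * ξ)
    (by rw [hξr, Real.sq_sqrt hr])
  have hv : 0 < ‖v‖ := norm_pos_iff.2 hv
  refine mem_spectrum_of_forall_exists_norm_sub_smul_lt H t fun ε hε => ?_
  obtain ⟨N, hN⟩ := exists_nat_gt (4 * ‖b‖ ^ 2 / ε ^ 2)
  refine ⟨truncatedWave (conj ξ) v N, lt_of_pow_lt_pow_left₀ 2 (by positivity) ?_⟩
  rw [mul_pow, norm_truncatedWave_sq (by rw [Complex.norm_conj, hξ])]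
  calc _ ≤ 4 * (‖b‖ ^ 2 * ‖v‖ ^ 2) := hH.norm_apply_truncatedWave_sub_smul_sq_le hξ hv₀ hv₁ N
    _ < ε ^ 2 * ((2 * N + 1) * ‖v‖ ^ 2) := by
      rw [div_lt_iff₀ (by positivity)] at hN
      have : 4 * ‖b‖ ^ 2 < ε ^ 2 * (2 * N + 1) := by nlinarith [sq_nonneg ε]
      rw [← mul_assoc, ← mul_assoc]
      gcongr

end IsFreeDifferenceOperator

/-- The spectrum of the free first-order finite difference operator
`H₀` on `ℓ²(ℤ; ℂ²)` is the union of the two spectral bands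
`[−√(α²+(|a|+|b|)²), −√(α²+(|a|−|b|)²)] ∪ [√(α²+(|a|−|b|)²), √(α²+(|a|+|b|)²)]`,
viewed as a subset of `ℂ`. -/
theorem spectrum_H0_eq_bands (α : ℝ) (a b : ℂ) (ha : a ≠ 0) (hb : b ≠ 0)
    (H₀ : lp (fun _ : ℤ => EuclideanSpace ℂ (Fin 2)) 2 →L[ℂ]
          lp (fun _ : ℤ => EuclideanSpace ℂ (Fin 2)) 2)
    (hH₀ : ∀ (u : lp (fun _ : ℤ => EuclideanSpace ℂ (Fin 2)) 2) (n : ℤ),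
      H₀ u n 0 = (α : ℂ) * u n 0 + (starRingEnd ℂ) a * u n 1
          + (starRingEnd ℂ) b * u (n + 1) 1 ∧
      H₀ u n 1 = a * u n 0 + b * u (n - 1) 0 - (α : ℂ) * u n 1) :
    spectrum ℂ H₀ =
      (fun t : ℝ => (t : ℂ)) ''
        {t : ℝ | Real.sqrt (α ^ 2 + (‖a‖ - ‖b‖) ^ 2) ≤ |t| ∧
          |t| ≤ Real.sqrt (α ^ 2 + (‖a‖ + ‖b‖) ^ 2)} := by
  have hH : IsFreeDifferenceOperator α a b H₀ := hH₀
  ext z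
  constructor
  · intro hz
    obtain ⟨t, rfl, ht⟩ := hH.isSelfAdjoint.exists_eq_ofReal_abs_sq_sub_le _ hz
    exact ⟨t, (sqrt_le_abs_le_sqrt_iff α ‖a‖ ‖b‖ t).2
      (ht.trans hH.norm_sq_sub_algebraMap_le), rfl⟩
  · rintro ⟨t, ht, rfl⟩
    exact hH.ofReal_mem_spectrum ha hb ((sqrt_le_abs_le_sqrt_iff α ‖a‖ ‖b‖ t).1 ht)
end

section
/- Let α ∈ ℝ and let a, b be nonzero complex numbers. The operator H₀ on ℓ²(ℤ;ℂ²) has no eigenvalues: for every t ∈ ℂ and every u ∈ ℓ²(ℤ;ℂ²), if H₀u = t·u then u = 0. -/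
/-!
Writing `H₀ u = t • u` coordinatewise gives a first-order system which, since `a` and `b` are
nonzero, can be solved for `u (n + 2)`: each eigenvector satisfies a second-order linear
recurrence `u (n + 2) = p • u (n + 1) + q • u n` with constant coefficients. Over `ℂ` it factors
as two first-order recurrences `z (n + 1) = μ • z n`, and a solution of such a recurrence has
norm that is monotone in `n` (if `1 ≤ ‖μ‖`) or antitone (if `‖μ‖ ≤ 1`); vanishing at `+∞` or at
`-∞` then forces it to be zero. An element of `ℓ²` vanishes at both ends.
-/

open Complex Filter Topology

theorem eq_zero_of_forall_succ_eq_smul_of_tendsto_cofinite {𝕜 E : Type*} [NormedField 𝕜]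
    [NormedAddCommGroup E] [NormedSpace 𝕜 E] {μ : 𝕜} {z : ℤ → E}
    (hrec : ∀ n, z (n + 1) = μ • z n) (hz : Tendsto z cofinite (𝓝 0)) : z = 0 := by
  have hnorm : ∀ n, ‖z (n + 1)‖ = ‖μ‖ * ‖z n‖ := fun n => by rw [hrec, norm_smul]
  rw [Int.cofinite_eq, tendsto_sup] at hz
  funext n
  rw [Pi.zero_apply, ← norm_le_zero_iff]
  rcases le_total 1 ‖μ‖ with hμ | hμ
  · have hmono : Monotone (‖z ·‖) := monotone_int_of_le_succ fun m => by
      rw [hnorm]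
      exact le_mul_of_one_le_left (norm_nonneg _) hμ
    simpa using hmono.ge_of_tendsto hz.2.norm n
  · have hanti : Antitone (‖z ·‖) := antitone_int_of_succ_le fun m => by
      rw [hnorm]
      exact mul_le_of_le_one_left (norm_nonneg _) hμ
    simpa using hanti.ge_of_tendsto hz.1.norm n

theorem eq_zero_of_forall_add_two_eq_of_tendsto_cofinite {E : Type*}
    [NormedAddCommGroup E] [NormedSpace ℂ E] {p q : ℂ} {s : ℤ → E}
    (hrec : ∀ n, s (n + 2) = p • s (n + 1) + q • s n) (hs : Tendsto s cofinite (𝓝 0)) :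
    s = 0 := by
  -- the roots `l`, `μ` of `X ^ 2 - p X - q`
  obtain ⟨w, hw⟩ := IsAlgClosed.exists_pow_nat_eq (p ^ 2 + 4 * q) two_pos
  set l := (p + w) / 2
  set μ := (p - w) / 2
  have hsum : l + μ = p := by ring
  have hprod : q = -(l * μ) := by linear_combination (-1 / 4 : ℂ) * hw
  have hshift : Tendsto (fun n => s (n + 1)) cofinite (𝓝 0) :=
    hs.comp (add_left_injective 1).tendsto_cofinite
  have hfactor : (fun n => s (n + 1) - l • s n) = 0 := by
    refine eq_zero_of_forall_succ_eq_smul_of_tendsto_cofinite (μ := μ) (fun n => ?_) ?_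
    · rw [add_assoc, one_add_one_eq_two, hrec, ← hsum, hprod]
      module
    · simpa using hshift.sub (hs.const_smul l)
  exact eq_zero_of_forall_succ_eq_smul_of_tendsto_cofinite
    (fun n => sub_eq_zero.1 (congrFun hfactor n)) hs

theorem Memℓp.tendsto_norm_cofinite_zero {ι : Type*} {E : ι → Type*}
    [∀ i, NormedAddCommGroup (E i)] {p : ENNReal} {f : ∀ i, E i} (hf : Memℓp f p)
    (hp : 0 < p.toReal) : Tendsto (fun i => ‖f i‖) cofinite (𝓝 0) := by
  have hc : ContinuousAt (fun x : ℝ => x ^ p.toReal⁻¹) 0 :=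
    Real.continuousAt_rpow_const _ _ (Or.inr (inv_pos.2 hp).le)
  simpa [Function.comp_def, ← Real.rpow_mul (norm_nonneg _), mul_inv_cancel₀ hp.ne',
    Real.zero_rpow (inv_pos.2 hp).ne'] using
    hc.tendsto.comp (hf.summable hp).tendsto_cofinite_zero

theorem exists_forall_add_two_eq_of_firstOrderSystem {t α a a' b b' : ℂ} (ha : a ≠ 0)
    (hb' : b' ≠ 0) {u : ℤ → EuclideanSpace ℂ (Fin 2)}
    (h0 : ∀ n, t * u n 0 = α * u n 0 + a' * u n 1 + b' * u (n + 1) 1)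
    (h1 : ∀ n, t * u n 1 = a * u n 0 + b * u (n - 1) 0 - α * u n 1) :
    ∃ p q : ℂ, ∀ n, u (n + 2) = p • u (n + 1) + q • u n := by
  refine ⟨(t ^ 2 - α ^ 2 - a * a' - b * b') / (a * b'), -(a' * b) / (a * b'), fun n => ?_⟩
  have hx₀ := h0 n
  have hx₁ := h0 (n + 1)
  have hy₁ := h1 (n + 1)
  have hy₂ := h1 (n + 2)
  rw [show n + 1 + 1 = n + 2 by ring] at hx₁
  rw [add_sub_cancel_right] at hy₁
  rw [show n + 2 - 1 = n + 1 by ring] at hy₂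
  have key₀ : a * b' * u (n + 2) 0
      = (t ^ 2 - α ^ 2 - a * a' - b * b') * u (n + 1) 0 - a' * b * u n 0 := by
    linear_combination -(t + α) * hx₁ - a' * hy₁ - b' * hy₂
  have key₁ : a * b' * u (n + 2) 1
      = (t ^ 2 - α ^ 2 - a * a' - b * b') * u (n + 1) 1 - a' * b * u n 1 := by
    linear_combination -(t - α) * hy₁ - a * hx₁ - b * hx₀
  have hab : a * b' ≠ 0 := mul_ne_zero ha hb'
  ext i
  fin_cases i
  · simp only [Fin.zero_eta, PiLp.add_apply, PiLp.smul_apply, smul_eq_mul]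
    field_simp
    linear_combination key₀
  · simp only [Fin.mk_one, PiLp.add_apply, PiLp.smul_apply, smul_eq_mul]
    field_simp
    linear_combination key₁

/-- The free first-order finite difference operator `H₀` on `ℓ²(ℤ; ℂ²)`
has no eigenvalues: if `H₀ u = t • u` then `u = 0`. -/
theorem H0_no_eigenvalues (α : ℝ) (a b : ℂ) (ha : a ≠ 0) (hb : b ≠ 0)
    (H₀ : lp (fun _ : ℤ => EuclideanSpace ℂ (Fin 2)) 2 →L[ℂ]
          lp (fun _ : ℤ => EuclideanSpace ℂ (Fin 2)) 2)
    (hH₀ : ∀ (u : lp (fun _ : ℤ => EuclideanSpace ℂ (Fin 2)) 2) (n : ℤ),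
      H₀ u n 0 = (α : ℂ) * u n 0 + (starRingEnd ℂ) a * u n 1
          + (starRingEnd ℂ) b * u (n + 1) 1 ∧
      H₀ u n 1 = a * u n 0 + b * u (n - 1) 0 - (α : ℂ) * u n 1) :
    ∀ (t : ℂ) (u : lp (fun _ : ℤ => EuclideanSpace ℂ (Fin 2)) 2),
      H₀ u = t • u → u = 0 := by
  intro t u hu
  have heigen : ∀ n i, H₀ u n i = t * u n i := fun n i => by simp [hu]
  obtain ⟨p, q, hrec⟩ := exists_forall_add_two_eq_of_firstOrderSystem ha
    ((map_ne_zero _).2 hb) (fun n => (heigen n 0).symm.trans (hH₀ u n).1)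
    (fun n => (heigen n 1).symm.trans (hH₀ u n).2)
  have hlim : Tendsto (fun n => u n) cofinite (𝓝 0) :=
    tendsto_zero_iff_norm_tendsto_zero.2 ((lp.memℓp u).tendsto_norm_cofinite_zero (by simp))
  exact lp.ext (eq_zero_of_forall_add_two_eq_of_tendsto_cofinite hrec hlim)
end

section
/- Let α ∈ ℝ and let a, b be nonzero complex numbers. A number t ∈ ℂ is an eigenvalue of the half-line operator H₀⁺ on ℓ²(ℤ₊;ℂ²) (i.e., there exists u ≠ 0 in ℓ²(ℤ₊;ℂ²) with H₀⁺u = t·u) if and only if |b| > |a| and t = −α. -/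
/-!
Write an eigenvector as `(x, y)`. If `t = -α`, the second component equation together with
`x (-1) = 0` forces `x = 0`, and the first then makes `y` geometric with ratio
`-conj a / conj b`: such a `y` is square-summable and nonzero exactly when `‖a‖ < ‖b‖`.
If `t ≠ -α`, eliminating `y` gives a three-term recurrence for `x`, again with `x (-1) = 0`,
whose outer coefficients `conj b * a` and `conj a * b` have the same modulus. The Casoratian
`x n * x (n + 2) - x (n + 1) ^ 2` then has constant modulus; as it tends to zero it vanishes,
which forces `x = 0` and hence `y = 0`.
-/

open Filter Topology ComplexConjugate

namespace Memℓp

variable {ι : Type*} {E : ι → Type*} [∀ i, NormedAddCommGroup (E i)] {p : ENNReal}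

theorem tendsto_norm_cofinite_zero_s2 {f : ∀ i, E i} (hf : Memℓp f p) (hp : 0 < p.toReal) :
    Tendsto (fun i => ‖f i‖) cofinite (𝓝 0) := by
  have h := ((hf.summable hp).tendsto_cofinite_zero).rpow_const (p := p.toReal⁻¹)
    (Or.inr (inv_nonneg.2 hp.le))
  rw [Real.zero_rpow (inv_ne_zero hp.ne')] at h
  exact h.congr fun i => Real.rpow_rpow_inv (norm_nonneg _) hp.ne'

end Memℓp

theorem lp.tendsto_atTop_zero {E : Type*} [NormedAddCommGroup E] {p : ENNReal}
    (hp : 0 < p.toReal) (u : lp (fun _ : ℕ => E) p) : Tendsto (⇑u) atTop (𝓝 0) := by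
  rw [tendsto_zero_iff_norm_tendsto_zero, ← Nat.cofinite_eq_atTop]
  exact u.prop.tendsto_norm_cofinite_zero_s2 hp

theorem memℓp_of_norm_le_geometric {E : ℕ → Type*} [∀ n, NormedAddCommGroup (E n)]
    {p : ENNReal} (hp : 0 < p.toReal) {f : ∀ n, E n} {ρ : ℝ} (hρ₀ : 0 ≤ ρ) (hρ₁ : ρ < 1)
    (hf : ∀ n, ‖f n‖ ≤ ρ ^ n) : Memℓp f p := by
  refine memℓp_gen <| (summable_geometric_of_lt_one (r := ρ ^ p.toReal) (by positivity) ?_)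
    |>.of_nonneg_of_le (fun n => by positivity) fun n => ?_
  · exact Real.rpow_lt_one hρ₀ hρ₁ hp
  · rw [Real.rpow_pow_comm hρ₀]
    exact Real.rpow_le_rpow (norm_nonneg _) (hf n) hp.le

theorem eq_zero_of_monotone_norm_of_tendsto {E : Type*} [NormedAddCommGroup E] {w : ℕ → E}
    (hmono : Monotone fun n => ‖w n‖) (hlim : Tendsto w atTop (𝓝 0)) : w = 0 :=
  funext fun n => norm_le_zero_iff.1 <| hmono.ge_of_tendsto (by simpa using hlim.norm) n

section Recurrence

variable {K : Type*} [NormedField K] {p c r : K} {x : ℕ → K}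

def shiftCasoratian (x : ℕ → K) (n : ℕ) : K := x n * x (n + 2) - x (n + 1) ^ 2

theorem shiftCasoratian_succ (hrec : ∀ n, p * x (n + 2) = c * x (n + 1) - r * x n) (n : ℕ) :
    p * shiftCasoratian x (n + 1) = r * shiftCasoratian x n := by
  unfold shiftCasoratian
  linear_combination x (n + 1) * hrec (n + 1) - x (n + 2) * hrec n

theorem shiftCasoratian_zero (h₀ : p * x 1 = c * x 0)
    (hrec : ∀ n, p * x (n + 2) = c * x (n + 1) - r * x n) :
    p * shiftCasoratian x 0 = -(r * x 0 ^ 2) := by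
  unfold shiftCasoratian
  linear_combination x 0 * hrec 0 - x 1 * h₀

/-- `h₀` is the recurrence at `n = -1` with `x (-1) = 0`. -/
theorem eq_zero_of_recurrence_of_tendsto (hp : p ≠ 0) (hpr : ‖p‖ = ‖r‖)
    (h₀ : p * x 1 = c * x 0) (hrec : ∀ n, p * x (n + 2) = c * x (n + 1) - r * x n)
    (hlim : Tendsto x atTop (𝓝 0)) : x = 0 := by
  have hr : r ≠ 0 := norm_ne_zero_iff.1 (hpr ▸ norm_ne_zero_iff.2 hp)
  have hnorm : ∀ n, ‖shiftCasoratian x (n + 1)‖ = ‖shiftCasoratian x n‖ := fun n =>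
    mul_left_cancel₀ (norm_ne_zero_iff.2 hp) <| by
      rw [← norm_mul, shiftCasoratian_succ hrec, norm_mul, hpr]
  have hlimC : Tendsto (shiftCasoratian x) atTop (𝓝 0) := by
    show Tendsto (fun n => x n * x (n + 2) - x (n + 1) ^ 2) atTop (𝓝 0)
    simpa using
      (hlim.mul ((tendsto_add_atTop_iff_nat 2).2 hlim)).sub
        (((tendsto_add_atTop_iff_nat 1).2 hlim).pow 2)
  have hC : shiftCasoratian x = 0 :=
    eq_zero_of_monotone_norm_of_tendsto (monotone_nat_of_le_succ fun n => (hnorm n).ge) hlimC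
  have hx₀ : x 0 = 0 := by
    simpa [hC, hp, hr] using shiftCasoratian_zero h₀ hrec
  have hx₁ : x 1 = 0 := by simpa [hx₀, hp] using h₀
  have hpair : ∀ n, x n = 0 ∧ x (n + 1) = 0 := by
    intro n
    induction n with
    | zero => exact ⟨hx₀, hx₁⟩
    | succ n ih => exact ⟨ih.2, by simpa [ih.1, ih.2, hp] using hrec n⟩
  exact funext fun n => (hpair n).1

end Recurrence

/-- Components of `H₀⁺ (x, y) = t (x, y)`, with `l = t - α` and `m = t + α`; the convention
`x (-1) = 0` splits the second equation in two. -/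
structure HalfLineEqs (a b l m : ℂ) (x y : ℕ → ℂ) : Prop where
  fst : ∀ n, l * x n = conj a * y n + conj b * y (n + 1)
  snd_zero : m * y 0 = a * x 0
  snd_succ : ∀ n, m * y (n + 1) = a * x (n + 1) + b * x n

namespace HalfLineEqs

variable {a b l m : ℂ} {x y : ℕ → ℂ}

theorem fst_eq_zero (h : HalfLineEqs a b l 0 x y) (ha : a ≠ 0) : x = 0 := by
  funext n
  induction n with
  | zero => simpa [ha] using h.snd_zero.symm
  | succ n ih => simpa [ih, ha] using (h.snd_succ n).symm

theorem snd_eq_zero (h : HalfLineEqs a b l m 0 y) (hb : b ≠ 0)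
    (hab : ‖b‖ ≤ ‖a‖) (hlim : Tendsto y atTop (𝓝 0)) : y = 0 := by
  have hstep : ∀ n, ‖b‖ * ‖y (n + 1)‖ = ‖a‖ * ‖y n‖ := fun n => by
    have := h.fst n
    simp only [Pi.zero_apply, mul_zero] at this
    simpa using congrArg norm (eq_neg_of_add_eq_zero_right this.symm)
  refine eq_zero_of_monotone_norm_of_tendsto (monotone_nat_of_le_succ fun n => ?_) hlim
  exact le_of_mul_le_mul_left ((mul_le_mul_of_nonneg_right hab (norm_nonneg _)).trans_eq
    (hstep n).symm) (norm_pos_iff.2 hb)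

theorem fst_recurrence (h : HalfLineEqs a b l m x y) (n : ℕ) :
    conj b * a * x (n + 2)
      = (l * m - conj a * a - conj b * b) * x (n + 1) - conj a * b * x n := by
  linear_combination -(m * h.fst (n + 1)) - conj a * h.snd_succ n - conj b * h.snd_succ (n + 1)

theorem fst_recurrence_zero (h : HalfLineEqs a b l m x y) :
    conj b * a * x 1 = (l * m - conj a * a - conj b * b) * x 0 := by
  linear_combination -(m * h.fst 0) - conj a * h.snd_zero - conj b * h.snd_succ 0

theorem eq_zero (h : HalfLineEqs a b l m x y) (ha : a ≠ 0) (hb : b ≠ 0)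
    (hm : m ≠ 0 ∨ ‖b‖ ≤ ‖a‖) (hx : Tendsto x atTop (𝓝 0)) (hy : Tendsto y atTop (𝓝 0)) :
    x = 0 ∧ y = 0 := by
  by_cases hm₀ : m = 0
  · subst hm₀
    have hx₀ := h.fst_eq_zero ha
    subst hx₀
    exact ⟨rfl, h.snd_eq_zero hb (hm.resolve_left (not_not.2 rfl)) hy⟩
  · have hx₀ : x = 0 := eq_zero_of_recurrence_of_tendsto (mul_ne_zero (by simpa) ha)
      (by simp [mul_comm]) h.fst_recurrence_zero h.fst_recurrence hx
    subst hx₀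
    refine ⟨rfl, funext fun n => ?_⟩
    cases n with
    | zero => simpa [hm₀] using h.snd_zero
    | succ n => simpa [hm₀] using h.snd_succ n

theorem geometric (hb : b ≠ 0) (l : ℂ) :
    HalfLineEqs a b l 0 0 fun n => (-(conj a / conj b)) ^ n where
  fst n := by
    have hr : conj b * -(conj a / conj b) = -conj a := by
      rw [mul_neg, mul_div_cancel₀ _ (by simpa)]
    simp only [Pi.zero_apply, mul_zero]
    linear_combination -((-(conj a / conj b)) ^ n * hr)
  snd_zero := by simp
  snd_succ n := by simp

end HalfLineEqs

local notation "ℓ²ℂ²" => lp (fun _ : ℕ => EuclideanSpace ℂ (Fin 2)) 2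

theorem lp_eq_smul_iff_halfLineEqs {α : ℝ} {a b : ℂ} {H : ℓ²ℂ² →L[ℂ] ℓ²ℂ²}
    (hH : ∀ (u : ℓ²ℂ²) (n : ℕ),
      H u n 0 = (α : ℂ) * u n 0 + conj a * u n 1 + conj b * u (n + 1) 1 ∧
      H u n 1 = a * u n 0 + (if n = 0 then 0 else b * u (n - 1) 0) - (α : ℂ) * u n 1)
    (u : ℓ²ℂ²) (t : ℂ) :
    H u = t • u ↔ HalfLineEqs a b (t - α) (t + α) (fun n => u n 0) (fun n => u n 1) := by
  have hcomp : H u = t • u ↔ ∀ n, H u n 0 = t * u n 0 ∧ H u n 1 = t * u n 1 := by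
    simp [lp.ext_iff, funext_iff, PiLp.ext_iff, Fin.forall_fin_two]
  simp only [hcomp, hH]
  constructor
  · intro h
    refine ⟨fun n => by linear_combination -(h n).1, ?_, fun n => ?_⟩
    · have h₀ := (h 0).2
      rw [if_pos rfl] at h₀
      linear_combination -h₀
    · have h₁ := (h (n + 1)).2
      rw [if_neg n.succ_ne_zero, Nat.add_sub_cancel] at h₁
      linear_combination -h₁
  · intro h n
    refine ⟨by linear_combination -h.fst n, ?_⟩
    cases n with
    | zero => rw [if_pos rfl]; linear_combination -h.snd_zero
    | succ n => rw [if_neg n.succ_ne_zero, Nat.add_sub_cancel]; linear_combination -h.snd_succ n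

/-- A number `t ∈ ℂ` is an eigenvalue of the half-line operator `H₀⁺`
on `ℓ²(ℤ₊; ℂ²)` if and only if `|b| > |a|` and `t = −α`. -/
theorem H0plus_eigenvalue_iff (α : ℝ) (a b : ℂ) (ha : a ≠ 0) (hb : b ≠ 0)
    (H₀p : lp (fun _ : ℕ => EuclideanSpace ℂ (Fin 2)) 2 →L[ℂ]
           lp (fun _ : ℕ => EuclideanSpace ℂ (Fin 2)) 2)
    (hH₀p : ∀ (u : lp (fun _ : ℕ => EuclideanSpace ℂ (Fin 2)) 2) (n : ℕ),
      H₀p u n 0 = (α : ℂ) * u n 0 + (starRingEnd ℂ) a * u n 1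
          + (starRingEnd ℂ) b * u (n + 1) 1 ∧
      H₀p u n 1 = a * u n 0 + (if n = 0 then 0 else b * u (n - 1) 0)
          - (α : ℂ) * u n 1) :
    ∀ t : ℂ,
      (∃ u : lp (fun _ : ℕ => EuclideanSpace ℂ (Fin 2)) 2, u ≠ 0 ∧ H₀p u = t • u) ↔
        (‖a‖ < ‖b‖ ∧ t = -(α : ℂ)) := by
  intro t
  have hlim (u : ℓ²ℂ²) (i : Fin 2) : Tendsto (fun n => u n i) atTop (𝓝 0) := by
    simpa [Function.comp_def] using ((EuclideanSpace.proj i).continuous.tendsto 0).comp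
      (lp.tendsto_atTop_zero (by norm_num) u)
  constructor
  · rintro ⟨u, hu, hHu⟩
    by_contra hne
    have hcase : t + α ≠ 0 ∨ ‖b‖ ≤ ‖a‖ := by
      by_contra! h
      exact hne ⟨h.2, eq_neg_of_add_eq_zero_left h.1⟩
    obtain ⟨h₀, h₁⟩ := ((lp_eq_smul_iff_halfLineEqs hH₀p u t).1 hHu).eq_zero ha hb hcase
      (hlim u 0) (hlim u 1)
    exact hu <| lp.ext <| funext fun n =>
      PiLp.ext (Fin.forall_fin_two.2 ⟨congrFun h₀ n, congrFun h₁ n⟩)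
  · rintro ⟨hab, rfl⟩
    set r := -(conj a / conj b)
    have hr : ‖r‖ < 1 := by simpa [r, div_lt_one (norm_pos_iff.2 hb)] using hab
    let u : ℓ²ℂ² := ⟨fun n => EuclideanSpace.single 1 (r ^ n),
      memℓp_of_norm_le_geometric (by norm_num) (norm_nonneg r) hr fun n => by simp⟩
    refine ⟨u, fun h => ?_, (lp_eq_smul_iff_halfLineEqs hH₀p u _).2 ?_⟩
    · simpa [u] using congrArg (fun v : ℓ²ℂ² => v 0 1) h
    · convert HalfLineEqs.geometric (a := a) hb (-α - α) using 1 <;> simp [u, r, Pi.zero_def]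
end

section
/- Under the block-partition setup, the series Σ_{j≥0} b_j converges, where b_j := ((−1)ⁿ/‖f_n‖₁)·a_n·f_n(j) for the unique n with j ∈ P_n. -/
open Filter

/-- Under the block-partition setup, the series `Σ_{j≥0} b_j` converges,
where `b_j := ((−1)ⁿ/‖f_n‖₁)·a_n·f_n(j)` for the unique `n` with `j ∈ P_n`.
The partition `P_n = {A n, …, A (n+1) − 1}` is encoded by the strictly increasing
sequence `A` of block left endpoints, with `A 0 = 0`. -/
theorem blockPartition_series_converges
    (A : ℕ → ℕ) (hA0 : A 0 = 0) (hAmono : StrictMono A)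
    (hsize : ∀ n : ℕ, 1 ≤ n → A (n + 1) - A n < A (n + 2) - A (n + 1))
    (f : ℕ → ℕ → ℝ) (hf0 : ∀ n j, 0 ≤ f n j)
    (hfsupp : ∀ n j, (j < A n ∨ A (n + 1) ≤ j) → f n j = 0)
    (hfpos : ∀ n, 0 < ∑ j ∈ Finset.Ico (A n) (A (n + 1)), f n j)
    (a : ℕ → ℝ) (ha : ∀ n, 0 < a n)
    (hconv : ∃ L : ℝ, Tendsto (fun N => ∑ n ∈ Finset.range N, (-1 : ℝ) ^ n * a n)
        atTop (nhds L))
    (hdiv : ¬ Summable a)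
    (b : ℕ → ℝ)
    (hb : ∀ n j, A n ≤ j → j < A (n + 1) →
      b j = ((-1 : ℝ) ^ n / ∑ i ∈ Finset.Ico (A n) (A (n + 1)), f n i) * a n * f n j) :
    ∃ L : ℝ, Tendsto (fun N => ∑ j ∈ Finset.range N, b j) atTop (nhds L) := by
  obtain ⟨L, hL⟩ := hconv
  set S : ℕ → ℝ := fun N => ∑ n ∈ Finset.range N, (-1 : ℝ) ^ n * a n with hSdef
  -- the terms of the alternating series tend to 0, hence a → 0
  have hterm : Tendsto (fun n => (-1 : ℝ) ^ n * a n) atTop (nhds 0) := by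
    have h1 : Tendsto (fun n => S (n + 1)) atTop (nhds L) :=
      hL.comp (tendsto_add_atTop_nat 1)
    have h2 := h1.sub hL
    simp only [sub_self] at h2
    have : (fun n => S (n + 1) - S n) = fun n => (-1 : ℝ) ^ n * a n := by
      funext n
      simp [hSdef, Finset.sum_range_succ]
    rwa [this] at h2
  have ha0 : Tendsto a atTop (nhds 0) := by
    have h2 := hterm.abs
    rw [abs_zero] at h2
    have : ∀ n, |(-1 : ℝ) ^ n * a n| = a n := by
      intro n
      rw [abs_mul, abs_pow, abs_neg, abs_one, one_pow, one_mul, abs_of_pos (ha n)]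
    simp only [this] at h2
    exact h2
  -- sum over a full block
  have hblock : ∀ n, ∑ j ∈ Finset.Ico (A n) (A (n + 1)), b j = (-1 : ℝ) ^ n * a n := by
    intro n
    have hrw : ∀ j ∈ Finset.Ico (A n) (A (n + 1)),
        b j = ((-1 : ℝ) ^ n / ∑ i ∈ Finset.Ico (A n) (A (n + 1)), f n i) * a n * f n j := by
      intro j hj
      rw [Finset.mem_Ico] at hj
      exact hb n j hj.1 hj.2
    rw [Finset.sum_congr rfl hrw, ← Finset.mul_sum]
    have hT := (hfpos n).ne'
    field_simp
  -- prefix sums agree with the alternating partial sums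
  have hprefix : ∀ n, ∑ j ∈ Finset.range (A n), b j = S n := by
    intro n
    induction n with
    | zero => simp [hA0, hSdef]
    | succ n ih =>
      have hle : A n ≤ A (n + 1) := (hAmono (Nat.lt_succ_self n)).le
      have : S (n + 1) = S n + (-1 : ℝ) ^ n * a n := by
        simp [hSdef, Finset.sum_range_succ]
      rw [this, ← ih, ← hblock n, Finset.range_eq_Ico,
        ← Finset.sum_Ico_consecutive _ (Nat.zero_le (A n)) hle, ← Finset.range_eq_Ico]
  refine ⟨L, ?_⟩
  rw [Metric.tendsto_atTop] at hL ⊢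
  rw [Metric.tendsto_atTop] at ha0
  intro ε hε
  obtain ⟨N1, h1⟩ := hL (ε / 2) (by positivity)
  obtain ⟨N2, h2⟩ := ha0 (ε / 2) (by positivity)
  refine ⟨A (max N1 N2), ?_⟩
  intro N hN
  set n := Nat.findGreatest (fun k => A k ≤ N) (N + 1) with hndef
  have hP : A n ≤ N :=
    Nat.findGreatest_spec (P := fun k => A k ≤ N) (Nat.zero_le _) (by simp [hA0])
  have hQ : N < A (n + 1) := by
    by_contra h
    push_neg at h
    have h3 : n + 1 ≤ A (n + 1) := hAmono.le_apply
    exact Nat.findGreatest_is_greatest (P := fun k => A k ≤ N)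
      (Nat.lt_succ_self n) (by omega) h
  have hn0 : max N1 N2 ≤ n := by
    have : A (max N1 N2) < A (n + 1) := lt_of_le_of_lt hN hQ
    have := hAmono.lt_iff_lt.mp this
    omega
  have hsplit : ∑ j ∈ Finset.range N, b j = S n + ∑ j ∈ Finset.Ico (A n) N, b j := by
    rw [Finset.range_eq_Ico, ← Finset.sum_Ico_consecutive _ (Nat.zero_le (A n)) hP,
      ← Finset.range_eq_Ico, hprefix n]
  have hbound : |∑ j ∈ Finset.Ico (A n) N, b j| ≤ a n := by
    set T : ℝ := ∑ i ∈ Finset.Ico (A n) (A (n + 1)), f n i with hTdef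
    have hT : 0 < T := hfpos n
    have hrw : ∀ j ∈ Finset.Ico (A n) N,
        b j = ((-1 : ℝ) ^ n / T) * a n * f n j := by
      intro j hj
      rw [Finset.mem_Ico] at hj
      exact hb n j hj.1 (lt_of_lt_of_le hj.2 hQ.le)
    rw [Finset.sum_congr rfl hrw, ← Finset.mul_sum, abs_mul]
    have hPle : ∑ j ∈ Finset.Ico (A n) N, f n j ≤ T :=
      Finset.sum_le_sum_of_subset_of_nonneg
        (Finset.Ico_subset_Ico le_rfl hQ.le) (fun j _ _ => hf0 n j)
    have hPnn : 0 ≤ ∑ j ∈ Finset.Ico (A n) N, f n j :=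
      Finset.sum_nonneg fun j _ => hf0 n j
    have habsC : |(-1 : ℝ) ^ n / T * a n| = a n / T := by
      rw [abs_mul, abs_div, abs_pow, abs_neg, abs_one, one_pow,
        abs_of_pos (ha n), abs_of_pos hT, one_div, inv_mul_eq_div]
    rw [habsC, abs_of_nonneg hPnn]
    calc a n / T * ∑ j ∈ Finset.Ico (A n) N, f n j
        ≤ a n / T * T := by
          exact mul_le_mul_of_nonneg_left hPle (le_of_lt (div_pos (ha n) hT))
      _ = a n := div_mul_cancel₀ _ hT.ne'
  have hSn := h1 n (le_trans (le_max_left N1 N2) hn0)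
  have han := h2 n (le_trans (le_max_right N1 N2) hn0)
  rw [Real.dist_eq] at hSn ⊢
  rw [Real.dist_eq, sub_zero, abs_of_pos (ha n)] at han
  rw [hsplit]
  calc |S n + ∑ j ∈ Finset.Ico (A n) N, b j - L|
      = |(S n - L) + ∑ j ∈ Finset.Ico (A n) N, b j| := by ring_nf
    _ ≤ |S n - L| + |∑ j ∈ Finset.Ico (A n) N, b j| := abs_add_le _ _
    _ < ε / 2 + ε / 2 := by
        apply add_lt_add_of_lt_of_le hSn (le_trans hbound han.le)
    _ = ε := by ring
end

section
/- Under the block-partition setup, for every integer p ≥ 1 the series Σ_{j≥0} |b_j + b_{j+1} + … + b_{j+p−1}| diverges, where b_j := ((−1)ⁿ/‖f_n‖₁)·a_n·f_n(j) for the unique n with j ∈ P_n. -/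
/-!
Past the index `p + 1` the blocks `P_n` have at least `p` elements, since their sizes increase
strictly. On such a block `b = c · f_n` with `|c| · ‖f_n‖₁ = a_n`, and the windows of length `p`
lying inside `P_n` cover it, so the sum of `|b_j + ⋯ + b_{j+p-1}|` over the starting points
`j ∈ P_n` is at least `a_n`. Summability of the window sums would therefore bound the partial
sums of `Σ a_n`.
-/

open Filter Finset

theorem add_le_succ_of_sub_lt_sub {A : ℕ → ℕ}
    (hsize : ∀ n : ℕ, 1 ≤ n → A (n + 1) - A n < A (n + 2) - A (n + 1)) {n p : ℕ} (hp : 0 < p)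
    (h : p < n) :
    A n + p ≤ A (n + 1) := by
  have hgap : ∀ m, m ≤ A (m + 2) - A (m + 1) := by
    intro m
    induction m with
    | zero => omega
    | succ m ih =>
      have : A (m + 2) - A (m + 1) < A (m + 3) - A (m + 2) := hsize (m + 1) (by omega)
      show m + 1 ≤ A (m + 3) - A (m + 2)
      omega
  obtain ⟨m, rfl⟩ : ∃ m, n = m + 1 := ⟨n - 1, by omega⟩
  have := hgap m
  show A (m + 1) + p ≤ A (m + 2)
  omega

theorem sum_range_sum_Ico_eq_sum_Ico {M : Type*} [AddCommMonoid M] {A : ℕ → ℕ} (hA : Monotone A)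
    (g : ℕ → M) (N : ℕ) :
    ∑ n ∈ range N, ∑ j ∈ Ico (A n) (A (n + 1)), g j = ∑ j ∈ Ico (A 0) (A N), g j := by
  induction N with
  | zero => simp
  | succ N ih =>
    rw [sum_range_succ, ih, sum_Ico_consecutive _ (hA N.zero_le) (hA N.le_succ)]

theorem summable_of_eventually_le_sum_Ico {a g : ℕ → ℝ} {A : ℕ → ℕ} (N : ℕ) (hA : Monotone A)
    (ha : ∀ n, 0 ≤ a n) (hg : ∀ j, 0 ≤ g j) (hgs : Summable g)
    (h : ∀ n, N ≤ n → a n ≤ ∑ j ∈ Ico (A n) (A (n + 1)), g j) : Summable a := by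
  refine (summable_nat_add_iff N).1 <|
    summable_of_sum_range_le (fun n => ha _) (c := ∑' j, g j) fun K => ?_
  calc ∑ n ∈ range K, a (n + N)
      ≤ ∑ n ∈ range K, ∑ j ∈ Ico (A (n + N)) (A (n + 1 + N)), g j :=
        sum_le_sum fun n _ => by
          simpa only [Nat.add_right_comm] using h (n + N) (Nat.le_add_left N n)
    _ = ∑ j ∈ Ico (A (0 + N)) (A (K + N)), g j :=
        sum_range_sum_Ico_eq_sum_Ico (fun i j hij => hA (Nat.add_le_add_right hij N)) g K
    _ ≤ ∑' j, g j := hgs.sum_le_tsum _ fun j _ => hg j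

theorem sum_Ico_le_sum_window_sums {M : Type*} [AddCommMonoid M] [PartialOrder M]
    [IsOrderedAddMonoid M] {F : ℕ → M} (hF : ∀ k, 0 ≤ F k) {l r p : ℕ} (hp : 0 < p)
    (hlr : l + p ≤ r) :
    ∑ k ∈ Ico l r, F k ≤ ∑ j ∈ Ico l (r + 1 - p), ∑ i ∈ range p, F (j + i) := by
  have hr : r + 1 - p = r - p + 1 := by omega
  rw [hr, sum_Ico_succ_top (by omega), ← sum_Ico_consecutive F (by omega : l ≤ r - p)
    (Nat.sub_le r p), sum_Ico_eq_sum_range F (r - p), Nat.sub_sub_self (by omega)]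
  gcongr with j
  simpa using single_le_sum (fun i _ => hF (j + i)) (mem_range.2 hp)

theorem abs_mul_sum_le_sum_abs_window_sums {f b : ℕ → ℝ} {c : ℝ} {l r p : ℕ} (hp : 0 < p)
    (hlr : l + p ≤ r) (hf : ∀ j, 0 ≤ f j) (hb : ∀ j ∈ Ico l r, b j = c * f j) :
    |c| * ∑ j ∈ Ico l r, f j ≤ ∑ j ∈ Ico l r, |∑ i ∈ range p, b (j + i)| := by
  calc |c| * ∑ j ∈ Ico l r, f j
      ≤ |c| * ∑ j ∈ Ico l (r + 1 - p), ∑ i ∈ range p, f (j + i) :=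
        mul_le_mul_of_nonneg_left (sum_Ico_le_sum_window_sums hf hp hlr) (abs_nonneg c)
    _ = ∑ j ∈ Ico l (r + 1 - p), |∑ i ∈ range p, b (j + i)| := by
        rw [mul_sum]
        refine sum_congr rfl fun j hj => ?_
        have hwin : ∀ i ∈ range p, b (j + i) = c * f (j + i) := fun i hi => by
          rw [mem_Ico] at hj; rw [mem_range] at hi
          exact hb (j + i) (mem_Ico.2 ⟨by omega, by omega⟩)
        rw [sum_congr rfl hwin, ← mul_sum, abs_mul, abs_of_nonneg (sum_nonneg fun i _ => hf _)]
    _ ≤ ∑ j ∈ Ico l r, |∑ i ∈ range p, b (j + i)| :=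
        sum_le_sum_of_subset_of_nonneg (Ico_subset_Ico_right (by omega))
          fun _ _ _ => abs_nonneg _

theorem blockPartition_window_sums_diverge_general
    (A : ℕ → ℕ) (hAmono : StrictMono A)
    (hsize : ∀ n : ℕ, 1 ≤ n → A (n + 1) - A n < A (n + 2) - A (n + 1))
    (f : ℕ → ℕ → ℝ) (hf0 : ∀ n j, 0 ≤ f n j)
    (hfpos : ∀ n, 0 < ∑ j ∈ Finset.Ico (A n) (A (n + 1)), f n j)
    (a : ℕ → ℝ) (ha : ∀ n, 0 < a n)
    (hdiv : ¬ Summable a)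
    (b : ℕ → ℝ)
    (hb : ∀ n j, A n ≤ j → j < A (n + 1) →
      b j = ((-1 : ℝ) ^ n / ∑ i ∈ Finset.Ico (A n) (A (n + 1)), f n i) * a n * f n j) :
    ∀ p : ℕ, 1 ≤ p → ¬ Summable (fun j : ℕ => |∑ i ∈ Finset.range p, b (j + i)|) := by
  intro p hp hsum
  refine hdiv <| summable_of_eventually_le_sum_Ico (p + 1) hAmono.monotone (fun n => (ha n).le)
    (fun j => abs_nonneg _) hsum fun n hn => ?_
  set S := ∑ i ∈ Ico (A n) (A (n + 1)), f n i
  have hS : 0 < S := hfpos n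
  calc a n = |(-1 : ℝ) ^ n / S * a n| * S := by
        rw [abs_mul, abs_div, abs_pow, abs_neg, abs_one, one_pow, abs_of_pos hS,
          abs_of_pos (ha n)]
        field_simp
    _ ≤ _ := abs_mul_sum_le_sum_abs_window_sums hp (add_le_succ_of_sub_lt_sub hsize hp hn)
        (hf0 n) fun j hj => hb n j (mem_Ico.1 hj).1 (mem_Ico.1 hj).2

/-- Under the block-partition setup, for every integer `p ≥ 1` the series
`Σ_{j≥0} |b_j + b_{j+1} + … + b_{j+p−1}|` diverges, where
`b_j := ((−1)ⁿ/‖f_n‖₁)·a_n·f_n(j)` for the unique `n` with `j ∈ P_n`. -/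
theorem blockPartition_window_sums_diverge
    (A : ℕ → ℕ) (hA0 : A 0 = 0) (hAmono : StrictMono A)
    (hsize : ∀ n : ℕ, 1 ≤ n → A (n + 1) - A n < A (n + 2) - A (n + 1))
    (f : ℕ → ℕ → ℝ) (hf0 : ∀ n j, 0 ≤ f n j)
    (hfsupp : ∀ n j, (j < A n ∨ A (n + 1) ≤ j) → f n j = 0)
    (hfpos : ∀ n, 0 < ∑ j ∈ Finset.Ico (A n) (A (n + 1)), f n j)
    (a : ℕ → ℝ) (ha : ∀ n, 0 < a n)
    (hconv : ∃ L : ℝ, Tendsto (fun N => ∑ n ∈ Finset.range N, (-1 : ℝ) ^ n * a n)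
        atTop (nhds L))
    (hdiv : ¬ Summable a)
    (b : ℕ → ℝ)
    (hb : ∀ n j, A n ≤ j → j < A (n + 1) →
      b j = ((-1 : ℝ) ^ n / ∑ i ∈ Finset.Ico (A n) (A (n + 1)), f n i) * a n * f n j) :
    ∀ p : ℕ, 1 ≤ p → ¬ Summable (fun j : ℕ => |∑ i ∈ Finset.range p, b (j + i)|) :=
  blockPartition_window_sums_diverge_general A hAmono hsize f hf0 hfpos a ha hdiv b hb
end

section
/- Under the block-partition setup, assume in addition that f_n(α_n) = 0 for every n, that L₁ := sup_n (β_n·a_n·max_{j∈P_n} f_n(j))/‖f_n‖₁ < ∞, and that L₂ := sup_n (β_n²·a_n/‖f_n‖₁)·max({|f_n(j) − f_n(j+1)| : α_n ≤ j < β_n} ∪ {f_n(β_n)}) < ∞. Then the sequences (j·b_j)_{j∈ℤ₊} and (j²·(b_j − b_{j+1}))_{j∈ℤ₊} are bounded, where b_j := ((−1)ⁿ/‖f_n‖₁)·a_n·f_n(j) for the unique n with j ∈ P_n. -/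
open Filter

/-- Under the block-partition setup, if in addition `f_n(α_n) = 0`
for every `n` and the two sup-bounds `L₁, L₂` are finite, then the sequences
`(j·b_j)` and `(j²·(b_j − b_{j+1}))` are bounded, where
`b_j := ((−1)ⁿ/‖f_n‖₁)·a_n·f_n(j)` for the unique `n` with `j ∈ P_n`.
Here `β_n = A (n+1) − 1` is the right endpoint of the block `P_n`. -/
theorem blockPartition_boundedness
    (A : ℕ → ℕ) (hA0 : A 0 = 0) (hAmono : StrictMono A)
    (hsize : ∀ n : ℕ, 1 ≤ n → A (n + 1) - A n < A (n + 2) - A (n + 1))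
    (f : ℕ → ℕ → ℝ) (hf0 : ∀ n j, 0 ≤ f n j)
    (hfsupp : ∀ n j, (j < A n ∨ A (n + 1) ≤ j) → f n j = 0)
    (hfpos : ∀ n, 0 < ∑ j ∈ Finset.Ico (A n) (A (n + 1)), f n j)
    (a : ℕ → ℝ) (ha : ∀ n, 0 < a n)
    (hconv : ∃ L : ℝ, Tendsto (fun N => ∑ n ∈ Finset.range N, (-1 : ℝ) ^ n * a n)
        atTop (nhds L))
    (hdiv : ¬ Summable a)
    (b : ℕ → ℝ)
    (hb : ∀ n j, A n ≤ j → j < A (n + 1) →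
      b j = ((-1 : ℝ) ^ n / ∑ i ∈ Finset.Ico (A n) (A (n + 1)), f n i) * a n * f n j)
    (hfα : ∀ n, f n (A n) = 0)
    (hL1 : ∃ L₁ : ℝ, ∀ n j, A n ≤ j → j < A (n + 1) →
      ((A (n + 1) : ℝ) - 1) * a n * f n j / (∑ i ∈ Finset.Ico (A n) (A (n + 1)), f n i)
        ≤ L₁)
    (hL2 : ∃ L₂ : ℝ,
      (∀ n j, A n ≤ j → j + 1 < A (n + 1) →
        ((A (n + 1) : ℝ) - 1) ^ 2 * a n * |f n j - f n (j + 1)|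
            / (∑ i ∈ Finset.Ico (A n) (A (n + 1)), f n i) ≤ L₂) ∧
      (∀ n, ((A (n + 1) : ℝ) - 1) ^ 2 * a n * f n (A (n + 1) - 1)
            / (∑ i ∈ Finset.Ico (A n) (A (n + 1)), f n i) ≤ L₂)) :
    (∃ C : ℝ, ∀ j : ℕ, |(j : ℝ) * b j| ≤ C) ∧
    (∃ C : ℝ, ∀ j : ℕ, |(j : ℝ) ^ 2 * (b j - b (j + 1))| ≤ C) := by
  classical
  -- every j lies in some block
  have hblock : ∀ j : ℕ, ∃ n, A n ≤ j ∧ j < A (n + 1) := by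
    intro j
    have hex : ∃ k, j < A k :=
      ⟨j + 1, lt_of_lt_of_le (Nat.lt_succ_self j) hAmono.le_apply⟩
    have hkspec : j < A (Nat.find hex) := Nat.find_spec hex
    have hk0 : Nat.find hex ≠ 0 := by
      intro h
      rw [h, hA0] at hkspec
      exact Nat.not_lt_zero j hkspec
    obtain ⟨m, hm⟩ := Nat.exists_eq_succ_of_ne_zero hk0
    rw [hm] at hkspec
    refine ⟨m, ?_, hkspec⟩
    by_contra h
    push_neg at h
    exact Nat.find_min hex (by omega) h
  have habs : ∀ n j, A n ≤ j → j < A (n + 1) →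
      |b j| = a n * f n j / (∑ i ∈ Finset.Ico (A n) (A (n + 1)), f n i) := by
    intro n j h1 h2
    have hS := hfpos n
    rw [hb n j h1 h2, abs_mul, abs_mul, abs_div, abs_pow, abs_neg, abs_one, one_pow,
      abs_of_pos hS, abs_of_pos (ha n), abs_of_nonneg (hf0 n j)]
    ring
  have hcast : ∀ n j, j < A (n + 1) → (j : ℝ) ≤ (A (n + 1) : ℝ) - 1 := by
    intro n j h
    have : (j : ℝ) + 1 ≤ (A (n + 1) : ℝ) := by exact_mod_cast Nat.succ_le_of_lt h
    linarith
  obtain ⟨L₁, hL1⟩ := hL1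
  obtain ⟨L₂, hL2a, hL2b⟩ := hL2
  constructor
  · refine ⟨L₁, fun j => ?_⟩
    obtain ⟨n, h1, h2⟩ := hblock j
    have hS := hfpos n
    calc |(j : ℝ) * b j| = (j : ℝ) * (a n * f n j / (∑ i ∈ Finset.Ico (A n) (A (n + 1)), f n i)) := by
          rw [abs_mul, abs_of_nonneg (Nat.cast_nonneg j), habs n j h1 h2]
      _ = (j : ℝ) * a n * f n j / (∑ i ∈ Finset.Ico (A n) (A (n + 1)), f n i) := by ring
      _ ≤ ((A (n + 1) : ℝ) - 1) * a n * f n j / (∑ i ∈ Finset.Ico (A n) (A (n + 1)), f n i) := by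
          gcongr <;> first
            | exact (ha n).le
            | exact hf0 n j
            | exact hcast n j h2
      _ ≤ L₁ := hL1 n j h1 h2
  · refine ⟨L₂, fun j => ?_⟩
    obtain ⟨n, h1, h2⟩ := hblock j
    have hS := hfpos n
    by_cases hcase : j + 1 < A (n + 1)
    · -- both j and j+1 in block n
      have hbj := hb n j h1 h2
      have hbj1 := hb n (j + 1) (le_trans h1 (Nat.le_succ j)) hcase
      have key : |(j : ℝ) ^ 2 * (b j - b (j + 1))|
          = (j : ℝ) ^ 2 * a n * |f n j - f n (j + 1)|
            / (∑ i ∈ Finset.Ico (A n) (A (n + 1)), f n i) := by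
        rw [hbj, hbj1]
        have : ((-1 : ℝ) ^ n / ∑ i ∈ Finset.Ico (A n) (A (n + 1)), f n i) * a n * f n j
            - ((-1 : ℝ) ^ n / ∑ i ∈ Finset.Ico (A n) (A (n + 1)), f n i) * a n * f n (j + 1)
            = ((-1 : ℝ) ^ n * a n / ∑ i ∈ Finset.Ico (A n) (A (n + 1)), f n i)
              * (f n j - f n (j + 1)) := by ring
        rw [this]
        simp only [abs_mul, abs_div, abs_pow, abs_neg, abs_one, one_pow,
          abs_of_pos hS, abs_of_pos (ha n), Nat.abs_cast]
        ring
      rw [key]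
      calc (j : ℝ) ^ 2 * a n * |f n j - f n (j + 1)|
            / (∑ i ∈ Finset.Ico (A n) (A (n + 1)), f n i)
          ≤ ((A (n + 1) : ℝ) - 1) ^ 2 * a n * |f n j - f n (j + 1)|
            / (∑ i ∈ Finset.Ico (A n) (A (n + 1)), f n i) := by
            gcongr <;> first
              | exact (ha n).le
              | exact abs_nonneg _
              | exact Nat.cast_nonneg j
              | exact hcast n j h2
        _ ≤ L₂ := hL2a n j h1 hcase
    · -- j is the last element of block n
      have hj1 : j + 1 = A (n + 1) := by omega
      have hbj1 : b (j + 1) = 0 := by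
        have hlt : j + 1 < A (n + 2) := by
          have := hAmono (show n + 1 < n + 2 by omega)
          omega
        rw [hb (n + 1) (j + 1) (le_of_eq hj1.symm) hlt, hj1, hfα (n + 1), mul_zero]
      have hjeq : (j : ℝ) = (A (n + 1) : ℝ) - 1 := by
        have : ((j : ℝ) + 1) = (A (n + 1) : ℝ) := by exact_mod_cast congrArg (Nat.cast : ℕ → ℝ) hj1
        linarith
      have hjnat : j = A (n + 1) - 1 := by omega
      calc |(j : ℝ) ^ 2 * (b j - b (j + 1))| = (j : ℝ) ^ 2 * |b j| := by
            rw [hbj1, sub_zero, abs_mul, abs_pow, abs_of_nonneg (Nat.cast_nonneg j)]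
        _ = ((A (n + 1) : ℝ) - 1) ^ 2 * a n * f n (A (n + 1) - 1)
            / (∑ i ∈ Finset.Ico (A n) (A (n + 1)), f n i) := by
            rw [habs n j h1 h2, hjeq, ← hjnat]; ring
        _ ≤ L₂ := hL2b n
end

section
/- There exists a sequence b : ℤ₊ → ℝ with the following four properties: the series Σ_{j≥0} b_j converges; the sequence (j·b_j)_{j∈ℤ₊} is bounded; the sequence (j²·(b_j − b_{j+1}))_{j∈ℤ₊} is bounded; and for every integer p ≥ 1 the series Σ_{j≥0} |b_j + b_{j+1} + … + b_{j+p−1}| diverges. -/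
/-!
Take `b j = F j - F (j + 1)` with `F x = cos (log (x + 2)) / log (x + 2)`. The series telescopes
to `F 0` because `F → 0`, and the mean value theorem with `|F' x| ≲ 1 / x`, `|F'' x| ≲ 1 / x²`
gives the two weighted bounds. Once `j² (b j - b (j + 1))` is bounded, each window sum differs
from `p • b j` by `O(p² / j²)`, so summable window sums would make `∑ |b j|` finite. But at the
integers nearest to `exp (π m)` the values of `F` are about `(-1)ᵐ / (π m)`, so `∑ |b j|`
dominates a harmonic series.
-/

open Filter

section Discrete

open Finset

lemma abs_sub_add_le_of_abs_sub_succ_le {b : ℕ → ℝ} {a : ℕ} {D : ℝ}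
    (hD : ∀ k, |b (a + k) - b (a + k + 1)| ≤ D) (i : ℕ) : |b a - b (a + i)| ≤ i * D := by
  calc |b a - b (a + i)| = dist (b (a + 0)) (b (a + i)) := rfl
    _ ≤ ∑ k ∈ range i, dist (b (a + k)) (b (a + (k + 1))) :=
        dist_le_range_sum_dist (fun k => b (a + k)) i
    _ ≤ ∑ _k ∈ range i, D := sum_le_sum fun k _ => hD k
    _ = i * D := by rw [sum_const, card_range, nsmul_eq_mul]

lemma abs_sub_succ_le_of_abs_sq_mul_sub_succ_le {b : ℕ → ℝ} {C : ℝ}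
    (hC : ∀ j : ℕ, |(j : ℝ) ^ 2 * (b j - b (j + 1))| ≤ C) (j k : ℕ) :
    |b (j + 1 + k) - b (j + 1 + k + 1)| ≤ C / ((j : ℝ) + 1) ^ 2 := by
  have hpos : (0 : ℝ) < ((j : ℝ) + 1) ^ 2 := by positivity
  have hle : ((j : ℝ) + 1) ^ 2 ≤ ((j + 1 + k : ℕ) : ℝ) ^ 2 := by
    gcongr; push_cast; linarith [k.cast_nonneg (α := ℝ)]
  rw [le_div_iff₀ hpos]
  calc |b (j + 1 + k) - b (j + 1 + k + 1)| * ((j : ℝ) + 1) ^ 2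
      ≤ |b (j + 1 + k) - b (j + 1 + k + 1)| * ((j + 1 + k : ℕ) : ℝ) ^ 2 := by gcongr
    _ = |((j + 1 + k : ℕ) : ℝ) ^ 2 * (b (j + 1 + k) - b (j + 1 + k + 1))| := by
        rw [abs_mul, abs_sq, mul_comm]
    _ ≤ C := hC _

lemma summable_abs_of_summable_abs_window {b : ℕ → ℝ} {C : ℝ}
    (hC : ∀ j : ℕ, |(j : ℝ) ^ 2 * (b j - b (j + 1))| ≤ C) {p : ℕ} (hp : 1 ≤ p)
    (hW : Summable fun j => |∑ i ∈ range p, b (j + i)|) : Summable fun j => |b j| := by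
  have hwindow (j : ℕ) :
      p * |b (j + 1)| ≤ |∑ i ∈ range p, b (j + 1 + i)| + p ^ 2 * C / ((j : ℝ) + 1) ^ 2 := by
    have hdev :
        |p * b (j + 1) - ∑ i ∈ range p, b (j + 1 + i)| ≤ p ^ 2 * C / ((j : ℝ) + 1) ^ 2 :=
      calc |p * b (j + 1) - ∑ i ∈ range p, b (j + 1 + i)|
          = |∑ i ∈ range p, (b (j + 1) - b (j + 1 + i))| := by
            rw [sum_sub_distrib, sum_const, card_range, nsmul_eq_mul]
        _ ≤ ∑ i ∈ range p, |b (j + 1) - b (j + 1 + i)| := abs_sum_le_sum_abs _ _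
        _ ≤ ∑ _i ∈ range p, p * (C / ((j : ℝ) + 1) ^ 2) := by
            refine sum_le_sum fun i hi => ?_
            have hC0 : 0 ≤ C := by simpa using hC 0
            calc |b (j + 1) - b (j + 1 + i)|
                ≤ i * (C / ((j : ℝ) + 1) ^ 2) := abs_sub_add_le_of_abs_sub_succ_le
                  (abs_sub_succ_le_of_abs_sq_mul_sub_succ_le hC j) i
              _ ≤ p * (C / ((j : ℝ) + 1) ^ 2) := by
                  gcongr; exact_mod_cast (mem_range.1 hi).le
        _ = p ^ 2 * C / ((j : ℝ) + 1) ^ 2 := by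
            rw [sum_const, card_range, nsmul_eq_mul]; ring
    rw [show (p : ℝ) * |b (j + 1)| = |p * b (j + 1)| by rw [abs_mul, Nat.abs_cast]]
    linarith [abs_sub_abs_le_abs_sub (p * b (j + 1)) (∑ i ∈ range p, b (j + 1 + i))]
  have hsq : Summable fun j : ℕ => (p : ℝ) ^ 2 * C / ((j : ℝ) + 1) ^ 2 := by
    have := ((summable_nat_add_iff 1).2
      (Real.summable_one_div_nat_pow.2 one_lt_two)).mul_left ((p : ℝ) ^ 2 * C)
    simpa [div_eq_mul_inv] using this
  have hshift : Summable fun j => (p : ℝ) * |b (j + 1)| :=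
    .of_nonneg_of_le (fun j => by positivity) hwindow
      ((((summable_nat_add_iff 1).2 hW)).add hsq)
  have hp0 : (p : ℝ) ≠ 0 := Nat.cast_ne_zero.2 (Nat.one_le_iff_ne_zero.1 hp)
  exact (summable_nat_add_iff 1).1 (by simpa [hp0] using hshift.mul_left (p : ℝ)⁻¹)

end Discrete

lemma abs_sub_add_one_le_of_hasDerivAt {g g' : ℝ → ℝ} {x M : ℝ}
    (hg : ∀ y ∈ Set.Icc x (x + 1), HasDerivAt g (g' y) y)
    (hM : ∀ y ∈ Set.Icc x (x + 1), |g' y| ≤ M) : |g x - g (x + 1)| ≤ M := by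
  have h := (convex_Icc x (x + 1)).norm_image_sub_le_of_norm_hasDerivWithin_le
    (fun y hy => (hg y hy).hasDerivWithinAt) hM
    (Set.left_mem_Icc.2 (by linarith)) (Set.right_mem_Icc.2 (by linarith))
  rw [abs_sub_comm]
  simpa using h

open Finset in
lemma summable_abs_sub_comp_of_summable {G : ℕ → ℝ} (hG : Summable fun j => |G j - G (j + 1)|)
    {n : ℕ → ℕ} (hn : Monotone n) : Summable fun m => |G (n (m + 1)) - G (n m)| := by
  have hpartial (M : ℕ) : ∑ m ∈ range M, |G (n (m + 1)) - G (n m)| ≤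
      ∑ j ∈ Ico (n 0) (n M), |G j - G (j + 1)| := by
    induction M with
    | zero => simp
    | succ M ih =>
      rw [sum_range_succ, ← sum_Ico_consecutive _ (hn (Nat.zero_le M)) (hn M.le_succ)]
      gcongr
      rw [abs_sub_comm]
      exact dist_le_Ico_sum_dist G (hn M.le_succ)
  exact summable_of_sum_range_le (fun _ => abs_nonneg _)
    fun M => (hpartial M).trans (hG.sum_le_tsum _ fun _ _ => abs_nonneg _)

namespace LongRange

open Real

noncomputable def L (x : ℝ) : ℝ := log (x + 2)

noncomputable def F (x : ℝ) : ℝ := cos (L x) / L x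

noncomputable def F' (x : ℝ) : ℝ := (-sin (L x) * L x - cos (L x)) / (L x ^ 2 * (x + 2))

noncomputable def F'' (x : ℝ) : ℝ :=
  (L x ^ 2 * (sin (L x) - cos (L x)) + 2 * L x * sin (L x) + L x * cos (L x) + 2 * cos (L x)) /
    (L x ^ 3 * (x + 2) ^ 2)

lemma L_pos {x : ℝ} (hx : -1 < x) : 0 < L x := log_pos (by linarith)

lemma log_two_le_L {x : ℝ} (hx : 0 ≤ x) : log 2 ≤ L x := log_le_log two_pos (by linarith)

lemma hasDerivAt_L {x : ℝ} (hx : -1 < x) : HasDerivAt L (1 / (x + 2)) x := by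
  exact ((hasDerivAt_id' x).add_const 2).log (by linarith)

lemma hasDerivAt_F {x : ℝ} (hx : -1 < x) : HasDerivAt F (F' x) x := by
  have hL := hasDerivAt_L hx
  have hL0 := (L_pos hx).ne'
  refine (hL.cos.div hL hL0).congr_deriv ?_
  have : x + 2 ≠ 0 := by linarith
  unfold F'
  field_simp

lemma hasDerivAt_F' {x : ℝ} (hx : -1 < x) : HasDerivAt F' (F'' x) x := by
  have hL := hasDerivAt_L hx
  have hL0 := (L_pos hx).ne'
  have hx2 : x + 2 ≠ 0 := by linarith
  have hden : L x ^ 2 * (x + 2) ≠ 0 := by positivity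
  have hnum : HasDerivAt (fun y => -sin (L y) * L y - cos (L y))
      (-(cos (L x) * (1 / (x + 2))) * L x + -sin (L x) * (1 / (x + 2))
        - -sin (L x) * (1 / (x + 2))) x :=
    (hL.sin.neg.mul hL).sub hL.cos
  have hdenom : HasDerivAt (fun y => L y ^ 2 * (y + 2))
      (2 * L x ^ 1 * (1 / (x + 2)) * (x + 2) + L x ^ 2 * 1) x :=
    (hL.pow 2).mul ((hasDerivAt_id' x).add_const 2)
  refine (hnum.div hdenom hden).congr_deriv ?_
  unfold F''
  field_simp
  ring

lemma abs_F'_le {x : ℝ} (hx : 0 ≤ x) : |F' x| ≤ 4 / (x + 2) := by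
  have hL := (log_two_gt_d9).trans_le (log_two_le_L hx)
  obtain ⟨hs₁, hs₂⟩ := abs_le.1 (abs_sin_le_one (L x))
  obtain ⟨hc₁, hc₂⟩ := abs_le.1 (abs_cos_le_one (L x))
  have hnum : |-sin (L x) * L x - cos (L x)| ≤ 4 * L x ^ 2 :=
    abs_le.2 ⟨by nlinarith, by nlinarith⟩
  rw [F', abs_div, abs_of_pos (by positivity : 0 < L x ^ 2 * (x + 2)),
    div_le_div_iff₀ (by positivity) (by positivity)]
  nlinarith

lemma abs_F''_le {x : ℝ} (hx : 0 ≤ x) : |F'' x| ≤ 16 / (x + 2) ^ 2 := by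
  have hL := (log_two_gt_d9).trans_le (log_two_le_L hx)
  obtain ⟨hs₁, hs₂⟩ := abs_le.1 (abs_sin_le_one (L x))
  obtain ⟨hc₁, hc₂⟩ := abs_le.1 (abs_cos_le_one (L x))
  have hnum : |L x ^ 2 * (sin (L x) - cos (L x)) + 2 * L x * sin (L x) + L x * cos (L x) +
      2 * cos (L x)| ≤ 16 * L x ^ 3 :=
    abs_le.2 ⟨by nlinarith, by nlinarith⟩
  rw [F'', abs_div, abs_of_pos (by positivity : 0 < L x ^ 3 * (x + 2) ^ 2),
    div_le_div_iff₀ (by positivity) (by positivity)]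
  nlinarith

lemma abs_F'_le_of_le {x y : ℝ} (hx : 0 ≤ x) (hxy : x ≤ y) : |F' y| ≤ 4 / (x + 2) :=
  (abs_F'_le (hx.trans hxy)).trans (by gcongr)

lemma abs_F''_le_of_le {x y : ℝ} (hx : 0 ≤ x) (hxy : x ≤ y) : |F'' y| ≤ 16 / (x + 2) ^ 2 :=
  (abs_F''_le (hx.trans hxy)).trans (by gcongr)

noncomputable def b (j : ℕ) : ℝ := F j - F (j + 1)

lemma abs_b_le (j : ℕ) : |b j| ≤ 4 / ((j : ℝ) + 2) :=
  abs_sub_add_one_le_of_hasDerivAt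
    (fun y hy => hasDerivAt_F (by linarith [hy.1, j.cast_nonneg (α := ℝ)]))
    fun y hy => abs_F'_le_of_le j.cast_nonneg hy.1

lemma abs_b_sub_b_succ_le (j : ℕ) : |b j - b (j + 1)| ≤ 16 / ((j : ℝ) + 2) ^ 2 := by
  have hj : (0 : ℝ) ≤ j := j.cast_nonneg
  have key : |(F j - F (j + 1)) - (F (j + 1) - F (j + 1 + 1))| ≤ 16 / ((j : ℝ) + 2) ^ 2 :=
    abs_sub_add_one_le_of_hasDerivAt (g := fun y => F y - F (y + 1))
      (g' := fun y => F' y - F' (y + 1))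
      (fun y hy => (hasDerivAt_F (by linarith [hy.1])).sub
        ((hasDerivAt_F (by linarith [hy.1])).comp_add_const y 1))
      fun y hy => abs_sub_add_one_le_of_hasDerivAt
        (fun z hz => hasDerivAt_F' (by linarith [hy.1, hz.1]))
        fun z hz => abs_F''_le_of_le hj (by linarith [hy.1, hz.1])
  simpa [b] using key

lemma abs_natCast_mul_b_le (j : ℕ) : |(j : ℝ) * b j| ≤ 4 := by
  rw [abs_mul, Nat.abs_cast]
  calc (j : ℝ) * |b j| ≤ j * (4 / ((j : ℝ) + 2)) := by gcongr; exact abs_b_le j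
    _ ≤ 4 := by rw [mul_div_assoc', div_le_iff₀ (by positivity)]; linarith

lemma abs_sq_mul_b_sub_b_succ_le (j : ℕ) : |(j : ℝ) ^ 2 * (b j - b (j + 1))| ≤ 16 := by
  rw [abs_mul, abs_sq]
  calc (j : ℝ) ^ 2 * |b j - b (j + 1)| ≤ j ^ 2 * (16 / ((j : ℝ) + 2) ^ 2) := by
        gcongr; exact abs_b_sub_b_succ_le j
    _ ≤ 16 := by
        rw [mul_div_assoc', div_le_iff₀ (by positivity)]
        nlinarith [j.cast_nonneg (α := ℝ)]

lemma tendsto_F_atTop : Tendsto F atTop (nhds 0) := by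
  have hL : Tendsto L atTop atTop :=
    tendsto_log_atTop.comp (tendsto_atTop_add_const_right _ 2 tendsto_id)
  refine squeeze_zero_norm' ?_ hL.inv_tendsto_atTop
  filter_upwards [hL.eventually_gt_atTop 0] with x hx
  rw [Real.norm_eq_abs, F, abs_div, abs_of_pos hx, ← one_div]
  exact div_le_div_of_nonneg_right (abs_cos_le_one _) hx.le

lemma tendsto_sum_range_b :
    Tendsto (fun N => ∑ j ∈ Finset.range N, b j) atTop (nhds (F 0)) := by
  have htele (N : ℕ) : ∑ j ∈ Finset.range N, b j = F 0 - F N := by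
    simpa [b] using Finset.sum_range_sub' (fun j : ℕ => F j) N
  simp only [htele]
  simpa using (tendsto_F_atTop.comp tendsto_natCast_atTop_atTop).const_sub (F 0)

noncomputable def samplePoint (m : ℕ) : ℕ := ⌈exp (π * (m + 1))⌉₊ - 2

lemma samplePoint_monotone : Monotone samplePoint := fun _ _ h =>
  Nat.sub_le_sub_right (Nat.ceil_mono (exp_le_exp.2 (by gcongr))) 2

lemma L_samplePoint_mem (m : ℕ) :
    π * (m + 1) ≤ L (samplePoint m) ∧ L (samplePoint m) ≤ π * (m + 1) + 1 / 4 := by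
  set E := exp (π * (m + 1))
  have hE : 4 ≤ E := by
    nlinarith [add_one_le_exp (π * (m + 1)), pi_gt_three, m.cast_nonneg (α := ℝ)]
  have hceil : (samplePoint m : ℝ) + 2 = ⌈E⌉₊ := by
    have h2 : 2 ≤ ⌈E⌉₊ :=
      Nat.cast_le.1 ((by norm_num : ((2 : ℕ) : ℝ) ≤ 4).trans (hE.trans (Nat.le_ceil E)))
    rw [samplePoint, Nat.cast_sub h2]
    push_cast
    ring
  rw [L, hceil]
  constructor
  · calc π * (m + 1) = log E := (log_exp _).symm
      _ ≤ log ⌈E⌉₊ := log_le_log (exp_pos _) (Nat.le_ceil E)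
  · rw [log_le_iff_le_exp (by positivity), exp_add]
    calc (⌈E⌉₊ : ℝ) ≤ E + 1 := (Nat.ceil_lt_add_one (by positivity)).le
      _ ≤ E * (1 / 4 + 1) := by linarith
      _ ≤ E * exp (1 / 4) := by gcongr; exact add_one_le_exp _

lemma le_neg_one_pow_mul_F_samplePoint (m : ℕ) :
    1 / (4 * ((m : ℝ) + 1)) ≤ (-1) ^ (m + 1) * F (samplePoint m) := by
  obtain ⟨hlo, hhi⟩ := L_samplePoint_mem m
  set u := L (samplePoint m)
  set t := u - π * (m + 1) with ht
  have hu : 0 < u := by nlinarith [pi_pos, m.cast_nonneg (α := ℝ)]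
  have hcos : cos u = (-1) ^ (m + 1) * cos t := by
    rw [← cos_add_nat_mul_pi, ht]; push_cast; ring_nf
  have hsign : (-1 : ℝ) ^ (m + 1) * F (samplePoint m) = cos t / u := by
    rw [F, hcos, ← mul_div_assoc, ← mul_assoc, ← pow_add, Even.neg_one_pow ⟨m + 1, rfl⟩,
      one_mul]
  have hcos_t : 31 / 32 ≤ cos t := by
    nlinarith [one_sub_sq_div_two_le_cos (x := t)]
  rw [hsign, div_le_div_iff₀ (by positivity) hu]
  nlinarith [pi_lt_d2, mul_le_mul_of_nonneg_right hcos_t (by positivity : (0 : ℝ) ≤ 4 * (m + 1))]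

lemma le_abs_F_samplePoint_succ_sub (m : ℕ) :
    1 / (4 * ((m : ℝ) + 1)) ≤ |F (samplePoint (m + 1)) - F (samplePoint m)| := by
  have h₀ := le_neg_one_pow_mul_F_samplePoint m
  have h₁ := le_neg_one_pow_mul_F_samplePoint (m + 1)
  rw [pow_succ _ (m + 1)] at h₁
  have h₁_pos : 0 < 1 / (4 * (((m + 1 : ℕ) : ℝ) + 1)) := by positivity
  calc 1 / (4 * ((m : ℝ) + 1))
        ≤ (-1) ^ (m + 1) * (F (samplePoint m) - F (samplePoint (m + 1))) := by linarith
    _ ≤ |(-1) ^ (m + 1) * (F (samplePoint m) - F (samplePoint (m + 1)))| := le_abs_self _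
    _ = |F (samplePoint (m + 1)) - F (samplePoint m)| := by
        rw [abs_mul, abs_neg_one_pow, one_mul, abs_sub_comm]

lemma not_summable_abs_b : ¬Summable fun j => |b j| := by
  intro hb
  have hG : Summable fun j : ℕ => |F j - F (j + 1 : ℕ)| := by simpa [b] using hb
  have hsample := summable_abs_sub_comp_of_summable hG samplePoint_monotone
  have hharm : Summable fun m : ℕ => 1 / ((m : ℝ) + 1) := by
    refine ((hsample.of_nonneg_of_le (fun m => by positivity)
      le_abs_F_samplePoint_succ_sub).mul_left 4).congr fun m => ?_
    field_simp
  exact Real.not_summable_one_div_natCast ((summable_nat_add_iff 1).1 (by simpa using hharm))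

end LongRange

/-- There exists a real sequence `b : ℤ₊ → ℝ` whose series converges,
with `(j·b_j)` and `(j²·(b_j − b_{j+1}))` bounded, but such that for every `p ≥ 1`
the series `Σ_j |b_j + b_{j+1} + … + b_{j+p−1}|` diverges. -/
theorem exists_sequence_longRange :
    ∃ b : ℕ → ℝ,
      (∃ L : ℝ, Tendsto (fun N => ∑ j ∈ Finset.range N, b j) atTop (nhds L)) ∧
      (∃ C : ℝ, ∀ j : ℕ, |(j : ℝ) * b j| ≤ C) ∧
      (∃ C : ℝ, ∀ j : ℕ, |(j : ℝ) ^ 2 * (b j - b (j + 1))| ≤ C) ∧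
      (∀ p : ℕ, 1 ≤ p → ¬ Summable (fun j : ℕ => |∑ i ∈ Finset.range p, b (j + i)|)) := by
  open LongRange in
  exact ⟨b, ⟨F 0, tendsto_sum_range_b⟩, ⟨4, abs_natCast_mul_b_le⟩,
    ⟨16, abs_sq_mul_b_sub_b_succ_le⟩, fun p hp hW => not_summable_abs_b
      (summable_abs_of_summable_abs_window abs_sq_mul_b_sub_b_succ_le hp hW)⟩
end

section
/- Let (a_n)_{n∈ℕ} be a sequence of non-negative real numbers and let 0 < β < γ be real numbers such that ∫_1^∞ sup{a_n : n ∈ ℕ, β·t < n < γ·t} dt < ∞ (with the convention that the supremum over the empty set is 0). Then for every pair of real numbers 0 < μ < ν, one has ∫_1^∞ sup{a_n : n ∈ ℕ, μ·t < n < ν·t} dt < ∞. -/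
/-!
Since `0 < μ`, compactness of `[μ, ν]` lets finitely many dilated windows `(β c t, γ c t)`,
`c > 0`, cover the window `(μ t, ν t)` for every `t > 0`. So the `(μ, ν)`-supremum at `t` is
at most the sum of the `(β, γ)`-suprema at the points `c t`, and the substitution `s = c t`
bounds each of these integrals by the finite `(β, γ)`-integral plus the integral over `[c, 1)`,
where only the finitely many terms `a_n` with `n < γ` occur.
-/

open MeasureTheory Set
open scoped ENNReal

theorem ENNReal.ofReal_biSup_of_finite {ι : Type*} (f : ι → ℝ) {s : Set ι} (hs : s.Finite) :
    ENNReal.ofReal (⨆ i ∈ s, f i) = ⨆ i ∈ s, ENNReal.ofReal (f i) := by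
  cases isEmpty_or_nonempty ι
  · simp
  have hbdd : BddAbove (range fun i => ⨆ _ : i ∈ s, f i) := by
    refine ((hs.image f).insert 0).bddAbove.mono ?_
    rintro _ ⟨i, rfl⟩
    by_cases hi : i ∈ s
    · simpa [hi] using Or.inr ⟨i, hi, rfl⟩
    · simp [hi]
  rw [Monotone.map_ciSup_of_continuousAt ENNReal.continuous_ofReal.continuousAt
    ENNReal.ofReal_mono hbdd]
  refine iSup_congr fun i => ?_
  by_cases hi : i ∈ s <;> simp [hi]

theorem lintegral_comp_mul_left_Ici (f : ℝ → ℝ≥0∞) {c : ℝ} (hc : 0 < c) (a : ℝ) :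
    ∫⁻ t in Ici a, f (c * t) = ENNReal.ofReal c⁻¹ * ∫⁻ s in Ici (c * a), f s := by
  have hpre : (c * ·) ⁻¹' Ici (c * a) = Ici a := by
    ext t; simp [mul_le_mul_iff_right₀ hc]
  rw [← (measurableEmbedding_mulLeft₀ hc.ne').lintegral_map, ← hpre,
    ← Measure.restrict_map (measurable_const_mul c) measurableSet_Ici,
    Real.map_volume_mul_left hc.ne', abs_of_pos (inv_pos.2 hc), Measure.restrict_smul,
    lintegral_smul_measure, smul_eq_mul]

def window (β γ t : ℝ) : Set ℕ := {n | β * t < n ∧ (n : ℝ) < γ * t}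

theorem finite_window (β γ t : ℝ) : (window β γ t).Finite :=
  (finite_Iio ⌈γ * t⌉₊).subset fun _ hn => Nat.lt_ceil.2 hn.2

theorem window_subset_Iio_ceil {β γ t : ℝ} (hγ : 0 ≤ γ) (ht : t ≤ 1) :
    window β γ t ⊆ Iio ⌈γ⌉₊ :=
  fun _ hn => Nat.lt_ceil.2 (hn.2.trans_le (mul_le_of_le_one_right hγ ht))

noncomputable def windowSup (f : ℕ → ℝ≥0∞) (β γ t : ℝ) : ℝ≥0∞ := ⨆ n ∈ window β γ t, f n

theorem measurable_windowSup (f : ℕ → ℝ≥0∞) (β γ : ℝ) : Measurable (windowSup f β γ) := by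
  refine Measurable.iSup fun n => ?_
  have hset : MeasurableSet {t : ℝ | n ∈ window β γ t} :=
    (measurableSet_lt (measurable_const_mul β) measurable_const).inter
      (measurableSet_lt measurable_const (measurable_const_mul γ))
  classical
  simp_rw [iSup_eq_if]
  exact Measurable.ite hset measurable_const measurable_const

theorem exists_finset_cover_Ioo_mul {β γ : ℝ} (hβ : 0 < β) (hβγ : β < γ) {K : Set ℝ}
    (hK : IsCompact K) (hK0 : K ⊆ Ioi 0) :
    ∃ s : Finset ℝ, (∀ c ∈ s, 0 < c) ∧ K ⊆ ⋃ c ∈ s, Ioo (β * c) (γ * c) := by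
  have hcover : K ⊆ ⋃ c ∈ Ioi (0 : ℝ), Ioo (β * c) (γ * c) := by
    intro x hx
    have hx0 : 0 < x := hK0 hx
    have hγ : 0 < γ := hβ.trans hβγ
    refine mem_biUnion (x := 2 * x / (β + γ)) (show 0 < 2 * x / (β + γ) by positivity) ⟨?_, ?_⟩
    · rw [mul_div_assoc', div_lt_iff₀ (by linarith)]; nlinarith
    · rw [mul_div_assoc', lt_div_iff₀ (by linarith)]; nlinarith
  obtain ⟨s, hs_pos, hs, hKs⟩ := hK.elim_finite_subcover_image (fun _ _ => isOpen_Ioo) hcover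
  exact ⟨hs.toFinset, fun c hc => hs_pos (hs.mem_toFinset.1 hc), by simpa using hKs⟩

theorem exists_finset_window_cover {β γ μ : ℝ} (hβ : 0 < β) (hβγ : β < γ) (hμ : 0 < μ) (ν : ℝ) :
    ∃ s : Finset ℝ, (∀ c ∈ s, 0 < c) ∧
      ∀ t, 0 < t → window μ ν t ⊆ ⋃ c ∈ s, window β γ (c * t) := by
  obtain ⟨s, hs_pos, hs⟩ := exists_finset_cover_Ioo_mul hβ hβγ isCompact_Icc
    fun x hx => hμ.trans_le hx.1
  refine ⟨s, hs_pos, fun t ht n hn => ?_⟩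
  have hnt : (n : ℝ) / t ∈ Icc μ ν :=
    ⟨(le_div_iff₀ ht).2 hn.1.le, (div_le_iff₀ ht).2 hn.2.le⟩
  obtain ⟨c, hc, hnc⟩ := mem_iUnion₂.1 (hs hnt)
  refine mem_iUnion₂.2 ⟨c, hc, ?_, ?_⟩
  · rw [← mul_assoc, ← lt_div_iff₀ ht]; exact hnc.1
  · rw [← mul_assoc, ← div_lt_iff₀ ht]; exact hnc.2

theorem ENNReal.biSup_le_sum_biSup_of_subset {α ι : Type*} {f : α → ℝ≥0∞} {S : Set α}
    {T : ι → Set α} {s : Finset ι} (hST : S ⊆ ⋃ i ∈ s, T i) :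
    ⨆ x ∈ S, f x ≤ ∑ i ∈ s, ⨆ x ∈ T i, f x := by
  refine iSup₂_le fun x hx => ?_
  obtain ⟨i, hi, hxi⟩ := mem_iUnion₂.1 (hST hx)
  exact (le_iSup₂ (f := fun x _ => f x) x hxi).trans
    (Finset.single_le_sum (f := fun i => ⨆ x ∈ T i, f x) (fun _ _ => zero_le) hi)

theorem windowSup_le_sum_range_ceil (f : ℕ → ℝ≥0∞) (β : ℝ) {γ t : ℝ} (hγ : 0 ≤ γ)
    (ht : t ≤ 1) : windowSup f β γ t ≤ ∑ n ∈ Finset.range ⌈γ⌉₊, f n := by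
  refine iSup₂_le fun n hn => Finset.single_le_sum (fun _ _ => zero_le) ?_
  exact Finset.mem_range.2 (window_subset_Iio_ceil hγ ht hn)

theorem setLIntegral_windowSup_Ici_lt_top {f : ℕ → ℝ≥0∞} (hf : ∀ n, f n ≠ ⊤) {β γ : ℝ}
    (hγ : 0 ≤ γ) (h1 : ∫⁻ t in Ici 1, windowSup f β γ t < ⊤) (c : ℝ) :
    ∫⁻ t in Ici c, windowSup f β γ t < ⊤ := by
  have hsplit : Ici c ⊆ Ico c 1 ∪ Ici 1 := fun t ht => by
    rcases lt_or_ge t 1 with h | h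
    exacts [Or.inl ⟨ht, h⟩, Or.inr h]
  have hIco : ∫⁻ t in Ico c 1, windowSup f β γ t < ⊤ := calc
    _ ≤ ∫⁻ _ in Ico c 1, ∑ n ∈ Finset.range ⌈γ⌉₊, f n :=
        setLIntegral_mono measurable_const fun t ht =>
          windowSup_le_sum_range_ceil f β hγ ht.2.le
    _ = (∑ n ∈ Finset.range ⌈γ⌉₊, f n) * volume (Ico c 1) := setLIntegral_const _ _
    _ < ⊤ := ENNReal.mul_lt_top (ENNReal.sum_lt_top.2 fun n _ => (hf n).lt_top)
        (by simp [Real.volume_Ico])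
  exact ((lintegral_mono_set hsplit).trans (lintegral_union_le _ _ _)).trans_lt
    (ENNReal.add_lt_top.2 ⟨hIco, h1⟩)

theorem lintegral_windowSup_comp_mul_lt_top {f : ℕ → ℝ≥0∞} (hf : ∀ n, f n ≠ ⊤) {β γ : ℝ}
    (hγ : 0 ≤ γ) (h1 : ∫⁻ t in Ici 1, windowSup f β γ t < ⊤) {c : ℝ} (hc : 0 < c) :
    ∫⁻ t in Ici 1, windowSup f β γ (c * t) < ⊤ := by
  rw [lintegral_comp_mul_left_Ici _ hc]
  exact ENNReal.mul_lt_top ENNReal.ofReal_lt_top (setLIntegral_windowSup_Ici_lt_top hf hγ h1 _)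

theorem integral_sup_window_finite_of_finite_general
    (a : ℕ → ℝ) (β γ : ℝ) (hβ : 0 < β) (hβγ : β < γ)
    (hint : ∫⁻ t in Set.Ici (1 : ℝ),
        ENNReal.ofReal (⨆ n ∈ {n : ℕ | β * t < (n : ℝ) ∧ (n : ℝ) < γ * t}, a n) < ⊤) :
    ∀ μ ν : ℝ, 0 < μ → μ < ν →
      ∫⁻ t in Set.Ici (1 : ℝ),
        ENNReal.ofReal (⨆ n ∈ {n : ℕ | μ * t < (n : ℝ) ∧ (n : ℝ) < ν * t}, a n) < ⊤ := by
  intro μ ν hμ _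
  set f : ℕ → ℝ≥0∞ := fun n => ENNReal.ofReal (a n)
  have hW (β γ t : ℝ) : ENNReal.ofReal (⨆ n ∈ {n : ℕ | β * t < (n : ℝ) ∧ (n : ℝ) < γ * t}, a n)
      = windowSup f β γ t :=
    ENNReal.ofReal_biSup_of_finite a (finite_window β γ t)
  simp only [hW] at hint ⊢
  obtain ⟨s, hs_pos, hcover⟩ := exists_finset_window_cover hβ hβγ hμ ν
  have hmeas (c : ℝ) : Measurable fun t => windowSup f β γ (c * t) :=
    (measurable_windowSup f β γ).comp (measurable_const_mul c)
  calc ∫⁻ t in Ici 1, windowSup f μ ν t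
      ≤ ∫⁻ t in Ici 1, ∑ c ∈ s, windowSup f β γ (c * t) :=
        setLIntegral_mono (Finset.measurable_sum _ fun c _ => hmeas c) fun t ht =>
          ENNReal.biSup_le_sum_biSup_of_subset (hcover t (zero_lt_one.trans_le ht))
    _ = ∑ c ∈ s, ∫⁻ t in Ici 1, windowSup f β γ (c * t) :=
        lintegral_finsetSum _ fun c _ => hmeas c
    _ < ⊤ := ENNReal.sum_lt_top.2 fun c hc => lintegral_windowSup_comp_mul_lt_top
        (fun _ => ENNReal.ofReal_ne_top) (hβ.trans hβγ).le hint (hs_pos c hc)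

/-- If the tail integral `∫_1^∞ sup{a_n : β·t < n < γ·t} dt` is finite for
one pair `0 < β < γ`, then it is finite for every pair `0 < μ < ν`. The supremum over
the empty set is `0` (the real `iSup` convention, consistent with `a_n ≥ 0`). -/
theorem integral_sup_window_finite_of_finite
    (a : ℕ → ℝ) (ha : ∀ n, 0 ≤ a n) (β γ : ℝ) (hβ : 0 < β) (hβγ : β < γ)
    (hint : ∫⁻ t in Set.Ici (1 : ℝ),
        ENNReal.ofReal (⨆ n ∈ {n : ℕ | β * t < (n : ℝ) ∧ (n : ℝ) < γ * t}, a n) < ⊤) :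
    ∀ μ ν : ℝ, 0 < μ → μ < ν →
      ∫⁻ t in Set.Ici (1 : ℝ),
        ENNReal.ofReal (⨆ n ∈ {n : ℕ | μ * t < (n : ℝ) ∧ (n : ℝ) < ν * t}, a n) < ⊤ :=
  integral_sup_window_finite_of_finite_general a β γ hβ hβγ hint
end

section
/- Let (a_n)_{n∈ℕ} be a sequence of non-negative real numbers and let 0 < β < γ be real numbers such that ∫_1^∞ sup{a_n : n ∈ ℕ, β·t < n < γ·t} dt < ∞ (with the convention that the supremum over the empty set is 0). Then the sequence (n·a_n)_{n∈ℕ} is bounded. -/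
open MeasureTheory

/-- If the tail integral `∫_1^∞ sup{a_n : β·t < n < γ·t} dt` is finite
for some `0 < β < γ`, then the sequence `(n·a_n)` is bounded. The supremum over the
empty set is `0` (the real `iSup` convention, consistent with `a_n ≥ 0`). -/
theorem mul_self_bounded_of_integral_sup_window_finite
    (a : ℕ → ℝ) (ha : ∀ n, 0 ≤ a n) (β γ : ℝ) (hβ : 0 < β) (hβγ : β < γ)
    (hint : ∫⁻ t in Set.Ici (1 : ℝ),
        ENNReal.ofReal (⨆ n ∈ {n : ℕ | β * t < (n : ℝ) ∧ (n : ℝ) < γ * t}, a n) < ⊤) :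
    ∃ C : ℝ, ∀ n : ℕ, (n : ℝ) * a n ≤ C := by
  have hγ : 0 < γ := hβ.trans hβγ
  set F : ℝ → ℝ := fun t => ⨆ n ∈ {n : ℕ | β * t < (n : ℝ) ∧ (n : ℝ) < γ * t}, a n with hF
  set δ : ℝ := 1 / β - 1 / γ with hδdef
  have hδ : 0 < δ := by
    have h : 1 / γ < 1 / β := one_div_lt_one_div_of_lt hβ hβγ
    rw [hδdef, sub_pos]
    exact h
  set I : ENNReal := ∫⁻ t in Set.Ici (1 : ℝ), ENNReal.ofReal (F t) with hI
  have key : ∀ n : ℕ, γ ≤ (n : ℝ) →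
      ENNReal.ofReal (a n * ((n : ℝ) * δ)) ≤ I := by
    intro n hn
    have hn0 : 0 < (n : ℝ) := hγ.trans_le hn
    have hIoo : Set.Ioo ((n : ℝ) / γ) ((n : ℝ) / β) ⊆ Set.Ici 1 := by
      intro t ht
      have h1 : (1 : ℝ) ≤ (n : ℝ) / γ := (one_le_div hγ).2 hn
      exact le_of_lt (h1.trans_lt ht.1)
    have hle : ∀ t ∈ Set.Ioo ((n : ℝ) / γ) ((n : ℝ) / β),
        ENNReal.ofReal (a n) ≤ ENNReal.ofReal (F t) := by
      intro t ht
      have ht1 : (n : ℝ) / γ < t := ht.1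
      have ht2 : t < (n : ℝ) / β := ht.2
      have ht0 : 0 < t := by
        have : (0:ℝ) < (n:ℝ)/γ := div_pos hn0 hγ
        linarith
      have hmem : n ∈ {n : ℕ | β * t < (n : ℝ) ∧ (n : ℝ) < γ * t} := by
        constructor
        · have := (lt_div_iff₀ hβ).1 ht2
          linarith [mul_comm t β]
        · have := (div_lt_iff₀ hγ).1 ht1
          linarith [mul_comm t γ]
      -- boundedness of the auxiliary family
      set g : ℕ → ℝ := fun m => ⨆ _ : m ∈ {n : ℕ | β * t < (n : ℝ) ∧ (n : ℝ) < γ * t}, a m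
        with hg
      have hMbdd : BddAbove (Set.range g) := by
        refine ⟨∑ i ∈ Finset.range ⌈γ * t⌉₊, a i, ?_⟩
        rintro x ⟨m, rfl⟩
        by_cases hm : m ∈ {n : ℕ | β * t < (n : ℝ) ∧ (n : ℝ) < γ * t}
        · rw [hg]
          simp only [ciSup_pos hm]
          refine Finset.single_le_sum (fun i _ => ha i) ?_
          rw [Finset.mem_range]
          exact Nat.lt_ceil.2 hm.2
        · rw [hg]
          haveI : IsEmpty (m ∈ {n : ℕ | β * t < (n : ℝ) ∧ (n : ℝ) < γ * t}) :=
            isEmpty_Prop.2 hm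
          simp only [Real.iSup_of_isEmpty]
          exact Finset.sum_nonneg fun i _ => ha i
      have han : a n ≤ F t := by
        have h1 : g n = a n := by rw [hg]; exact ciSup_pos hmem
        have h2 : g n ≤ ⨆ m, g m := le_ciSup hMbdd n
        rw [h1] at h2
        exact h2
      exact ENNReal.ofReal_le_ofReal han
    calc ENNReal.ofReal (a n * ((n : ℝ) * δ))
        = ∫⁻ _ in Set.Ioo ((n : ℝ) / γ) ((n : ℝ) / β), ENNReal.ofReal (a n) := by
          rw [setLIntegral_const, Real.volume_Ioo, ← ENNReal.ofReal_mul (ha n)]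
          congr 2
          rw [hδdef]
          have hb := hβ.ne'
          have hg := hγ.ne'
          field_simp
      _ ≤ ∫⁻ t in Set.Ioo ((n : ℝ) / γ) ((n : ℝ) / β), ENNReal.ofReal (F t) := by
          refine lintegral_mono_ae ?_
          exact (ae_restrict_iff' measurableSet_Ioo).2 (ae_of_all _ hle)
      _ ≤ I := lintegral_mono' (Measure.restrict_mono hIoo le_rfl) le_rfl
  -- assemble the bound
  set M : ℕ := ⌈γ⌉₊ + 1 with hM
  refine ⟨I.toReal / δ + ∑ i ∈ Finset.range M, (i : ℝ) * a i, fun n => ?_⟩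
  have hsum_nonneg : 0 ≤ ∑ i ∈ Finset.range M, (i : ℝ) * a i :=
    Finset.sum_nonneg fun i _ => mul_nonneg (Nat.cast_nonneg i) (ha i)
  have hInt_nonneg : 0 ≤ I.toReal / δ := div_nonneg ENNReal.toReal_nonneg hδ.le
  by_cases hn : n < M
  · have : (n : ℝ) * a n ≤ ∑ i ∈ Finset.range M, (i : ℝ) * a i :=
      Finset.single_le_sum (fun i _ => mul_nonneg (Nat.cast_nonneg i) (ha i))
        (Finset.mem_range.2 hn)
    linarith
  · push_neg at hn
    have hγn : γ ≤ (n : ℝ) := by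
      have h1 : γ ≤ (⌈γ⌉₊ : ℝ) := Nat.le_ceil γ
      have h2 : (⌈γ⌉₊ : ℝ) ≤ (n : ℝ) := by
        exact_mod_cast le_trans (Nat.le_succ _) hn
      linarith
    have hkey := key n hγn
    have h1 : a n * ((n : ℝ) * δ) ≤ I.toReal :=
      (ENNReal.ofReal_le_iff_le_toReal hint.ne).1 hkey
    have h2 : (n : ℝ) * a n ≤ I.toReal / δ := by
      rw [le_div_iff₀ hδ]
      nlinarith
    linarith
end

section
/- Let (a_n)_{n∈ℕ} be a sequence of non-negative real numbers and let 0 < β < γ be real numbers such that ∫_1^∞ sup{a_n : n ∈ ℕ, β·t < n < γ·t} dt < ∞ (with the convention that the supremum over the empty set is 0). Then the series Σ_{n≥1} a_n converges. -/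
open MeasureTheory

open Set Function
open scoped ENNReal

/-!
On `J n = (n/γ, n/γ + δ)` with `δ = min (1/γ) (1/β - 1/γ)` and `n ≥ 1`, the index `n` lies in the
window `(β t, γ t)`, so the integrand is at least `a n` there. The left ends of the `J n` are `1/γ`
apart, so these intervals are pairwise disjoint, and for `n ≥ γ` they lie in `[1, ∞)`. Hence
`δ · ∑_{n ≥ ⌈γ⌉} a n` is at most the integral.
-/

theorem le_biSup_of_finite {ι α : Type*} [ConditionallyCompleteLattice α] {f : ι → α}
    {s : Set ι} (hs : s.Finite) {i : ι} (hi : i ∈ s) : f i ≤ ⨆ j ∈ s, f j := by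
  refine le_ciSup₂ (f := fun j _ => f j) ((hs.image f).bddAbove.mono ?_) i hi
  rintro _ ⟨_, ⟨j, rfl⟩, hj, rfl⟩
  exact mem_image_of_mem f hj

theorem summable_of_tsum_ofReal_ne_top {ι : Type*} {f : ι → ℝ} (hf : ∀ i, 0 ≤ f i)
    (h : ∑' i, ENNReal.ofReal (f i) ≠ ∞) : Summable f :=
  (ENNReal.summable_toReal h).congr fun i => ENNReal.toReal_ofReal (hf i)

theorem tsum_mul_measure_le_setLIntegral {α ι : Type*} [MeasurableSpace α] [Countable ι]
    {μ : Measure α} {s : ι → Set α} {S : Set α} (hs : ∀ i, MeasurableSet (s i))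
    (hd : Pairwise (Disjoint on s)) (hsS : ∀ i, s i ⊆ S) {f : α → ℝ≥0∞} {c : ι → ℝ≥0∞}
    (hc : ∀ i, ∀ x ∈ s i, c i ≤ f x) :
    ∑' i, c i * μ (s i) ≤ ∫⁻ x in S, f x ∂μ :=
  calc ∑' i, c i * μ (s i) = ∑' i, ∫⁻ _ in s i, c i ∂μ := by simp only [setLIntegral_const]
    _ ≤ ∑' i, ∫⁻ x in s i, f x ∂μ :=
      ENNReal.tsum_le_tsum fun i => setLIntegral_mono' (hs i) (hc i)
    _ = ∫⁻ x in ⋃ i, s i, f x ∂μ := (lintegral_iUnion hs hd f).symm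
    _ ≤ ∫⁻ x in S, f x ∂μ := lintegral_mono_set (iUnion_subset hsS)

theorem pairwise_disjoint_Ioo_natCast_div_add {a δ : ℝ} (hδ : δ ≤ a⁻¹) :
    Pairwise (Disjoint on fun n : ℕ => Ioo ((n : ℝ) / a) (n / a + δ)) := by
  refine (pairwise_disjoint_on _).2 fun m n hmn => Set.disjoint_left.2 ?_
  rintro t ⟨hmt, htm⟩ ⟨hnt, -⟩
  simp only [div_eq_mul_inv] at hmt htm hnt
  have hmn' : (m : ℝ) + 1 ≤ n := by exact_mod_cast hmn
  have hgap : 0 ≤ ((n : ℝ) - m - 1) * a⁻¹ := mul_nonneg (by linarith) (by linarith)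
  linarith

theorem mem_Ioo_div_div_iff {β γ x t : ℝ} (hβ : 0 < β) (hγ : 0 < γ) :
    t ∈ Ioo (x / γ) (x / β) ↔ β * t < x ∧ x < γ * t := by
  rw [mem_Ioo, div_lt_iff₀ hγ, lt_div_iff₀ hβ, mul_comm t, mul_comm t, and_comm]

/-- If the tail integral `∫_1^∞ sup{a_n : β·t < n < γ·t} dt` is finite
for some `0 < β < γ`, then the series `Σ a_n` converges. The supremum over the empty
set is `0` (the real `iSup` convention, consistent with `a_n ≥ 0`). -/
theorem summable_of_integral_sup_window_finite
    (a : ℕ → ℝ) (ha : ∀ n, 0 ≤ a n) (β γ : ℝ) (hβ : 0 < β) (hβγ : β < γ)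
    (hint : ∫⁻ t in Set.Ici (1 : ℝ),
        ENNReal.ofReal (⨆ n ∈ {n : ℕ | β * t < (n : ℝ) ∧ (n : ℝ) < γ * t}, a n) < ⊤) :
    Summable fun n : ℕ => a n := by
  have hγ : 0 < γ := hβ.trans hβγ
  have hc : 0 < β⁻¹ - γ⁻¹ := sub_pos.2 (inv_strictAnti₀ hβ hβγ)
  set δ := min γ⁻¹ (β⁻¹ - γ⁻¹)
  set N := ⌈γ⌉₊
  set J : ℕ → Set ℝ := fun n => Ioo (((n + N : ℕ) : ℝ) / γ) ((n + N : ℕ) / γ + δ)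
  have hJ_Ici (n : ℕ) : J n ⊆ Ici 1 := fun t ht =>
    le_trans ((one_le_div hγ).2 ((Nat.le_ceil γ).trans (mod_cast Nat.le_add_left N n))) ht.1.le
  have hJ_window (n : ℕ) : J n ⊆ Ioo (((n + N : ℕ) : ℝ) / γ) ((n + N : ℕ) / β) := by
    have hM : (1 : ℝ) ≤ (n + N : ℕ) := by
      exact_mod_cast Nat.one_le_iff_ne_zero.2 (by simp [N, hγ])
    refine Ioo_subset_Ioo_right ?_
    calc ((n + N : ℕ) : ℝ) / γ + δ ≤ (n + N : ℕ) / γ + (n + N : ℕ) * (β⁻¹ - γ⁻¹) := by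
          gcongr
          exact (min_le_right _ _).trans (le_mul_of_one_le_left hc.le hM)
      _ = (n + N : ℕ) / β := by ring
  have h_window_finite (t : ℝ) : {n : ℕ | β * t < n ∧ n < γ * t}.Finite :=
    (finite_Iio ⌈γ * t⌉₊).subset fun n hn => Nat.lt_ceil.2 hn.2
  have hfin := (tsum_mul_measure_le_setLIntegral (μ := volume) (fun n => measurableSet_Ioo)
    ((pairwise_disjoint_Ioo_natCast_div_add (min_le_left _ _)).comp_of_injective
      (add_left_injective N)) hJ_Ici fun n t ht => ENNReal.ofReal_le_ofReal
        (le_biSup_of_finite (h_window_finite t)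
          ((mem_Ioo_div_div_iff hβ hγ).1 (hJ_window n ht)))).trans_lt hint
  simp only [Real.volume_Ioo, add_sub_cancel_left, ENNReal.tsum_mul_right] at hfin
  refine (summable_nat_add_iff N).1 (summable_of_tsum_ofReal_ne_top (fun n => ha _) ?_)
  exact (ENNReal.lt_top_of_mul_ne_top_left hfin.ne (by simpa using lt_min (inv_pos.2 hγ) hc)).ne
end

section
/- Let l ∈ ℤ₊, r > 1 and C > 0, and let (a_n)_{n∈ℤ} be a family of non-negative real numbers such that a_n ≤ C/(|n|·ω_l^r(n)) for every n ∈ ℤ with n ≠ 0. Then ∫_1^∞ sup{a_n : n ∈ ℤ, t < |n| < 2t} dt < ∞ (with the convention that the supremum over the empty set is 0). -/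
open MeasureTheory

/-- Iterated logarithm: `lniter 0 x = 1`, `lniter 1 x = ln(1+x)`,
`lniter (p+1) x = ln(1 + lniter p x)` for `p ≥ 1`. -/
noncomputable def lniter : ℕ → ℝ → ℝ
  | 0, _ => 1
  | 1, x => Real.log (1 + x)
  | (p + 2), x => Real.log (1 + lniter (p + 1) x)

/-- The weight `ω_l^r(x) := (ln_{l+1}⟨x⟩)^r · ∏_{p=0}^{l} ln_p⟨x⟩`, with `⟨x⟩ = √(x²+1)`
and real exponent `r` (real power). -/
noncomputable def omegaWeight (l : ℕ) (r : ℝ) (x : ℝ) : ℝ :=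
  (lniter (l + 1) (Real.sqrt (x ^ 2 + 1))) ^ r *
    ∏ p ∈ Finset.range (l + 1), lniter p (Real.sqrt (x ^ 2 + 1))

/-! For `t ≥ 1` every `n` in the window satisfies `t < |n| ≤ ⟨n⟩`, and the weight
`L^r ∏_{p ≤ l} ln_p` (with `L = ln_{l+1}`) is increasing, so the supremum is at most
`C / (t L(t)^r ∏ ln_p(t))`, the brackets `⟨·⟩` now gone. Put `M_0(t) = t` and `M_p = ln_p` for
`p ≥ 1`; then `L = log (1 + M_l)`, so `L' = 1 / ∏_{p ≤ l} (1 + M_p)`, while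
`t ∏_{p ≤ l} ln_p = ∏_{p ≤ l} M_p`. As `M_p ≥ M_p(1) > 0` on `[1, ∞)`, each `1 + M_p` is at most
a constant times `M_p`, so the bound is `≤ K L^{-r} L'`, the derivative of `K L^{1-r} / (1 - r)`,
which tends to `0` at infinity because `r > 1`. -/

open Filter Set

lemma integrableOn_Ioi_rpow_neg_mul_deriv {u u' : ℝ → ℝ} {a r : ℝ} (hr : 1 < r)
    (hu : ∀ x ∈ Ici a, HasDerivAt u (u' x) x) (hpos : ∀ x ∈ Ici a, 0 < u x)
    (hu' : ∀ x ∈ Ioi a, 0 ≤ u' x) (htop : Tendsto u atTop atTop) :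
    IntegrableOn (fun x => u x ^ (-r) * u' x) (Ioi a) := by
  have hr' : 1 - r ≠ 0 := by linarith
  refine integrableOn_Ioi_deriv_of_nonneg' (g := fun x => u x ^ (1 - r) / (1 - r)) (l := 0)
    (fun x hx => ?_) (fun x hx => mul_nonneg (Real.rpow_nonneg (hpos x (mem_Ici_of_Ioi hx)).le _)
      (hu' x hx)) ?_
  · have h := ((Real.hasDerivAt_rpow_const (p := 1 - r) (Or.inl (hpos x hx).ne')).comp x
      (hu x hx)).div_const (1 - r)
    refine h.congr_deriv ?_
    rw [sub_sub_cancel_left]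
    field_simp
  · have h := (tendsto_rpow_neg_atTop (sub_pos.2 hr)).comp htop
    simpa [neg_sub, Function.comp_def] using h.div_const (1 - r)

-- The `M_p` above: unlike `lniter`, it obeys one recursion for all `p` (`lniter_succ`).
noncomputable def lniterArg : ℕ → ℝ → ℝ
  | 0, x => x
  | p + 1, x => lniter (p + 1) x

lemma lniter_succ (p : ℕ) (x : ℝ) : lniter (p + 1) x = Real.log (1 + lniterArg p x) := by
  cases p <;> rfl

lemma lniterArg_succ (p : ℕ) : lniterArg (p + 1) = fun x => Real.log (1 + lniterArg p x) :=
  funext (lniter_succ p)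

lemma lniterArg_pos {x : ℝ} (hx : 0 < x) : ∀ p, 0 < lniterArg p x
  | 0 => hx
  | p + 1 => by
    rw [lniterArg_succ]
    exact Real.log_pos (by linarith [lniterArg_pos hx p])

lemma lniter_pos {x : ℝ} (hx : 0 < x) : ∀ p, 0 < lniter p x
  | 0 => one_pos
  | p + 1 => lniterArg_pos hx (p + 1)

lemma lniterArg_mono {x y : ℝ} (hx : 0 < x) (hxy : x ≤ y) : ∀ p, lniterArg p x ≤ lniterArg p y
  | 0 => hxy
  | p + 1 => by
    rw [lniterArg_succ]
    exact Real.log_le_log (by linarith [lniterArg_pos hx p])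
      (by linarith [lniterArg_mono hx hxy p])

lemma lniter_mono {x y : ℝ} (hx : 0 < x) (hxy : x ≤ y) : ∀ p, lniter p x ≤ lniter p y
  | 0 => le_rfl
  | p + 1 => lniterArg_mono hx hxy (p + 1)

lemma tendsto_lniterArg_atTop : ∀ p, Tendsto (lniterArg p) atTop atTop
  | 0 => tendsto_id
  | p + 1 => by
    rw [lniterArg_succ]
    exact Real.tendsto_log_atTop.comp
      (tendsto_atTop_add_const_left _ 1 (tendsto_lniterArg_atTop p))

lemma hasDerivAt_lniterArg {x : ℝ} (hx : 0 < x) : ∀ p,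
    HasDerivAt (lniterArg p) (∏ q ∈ Finset.range p, (1 + lniterArg q x))⁻¹ x
  | 0 => by
    rw [Finset.prod_range_zero, inv_one]
    exact hasDerivAt_id x
  | p + 1 => by
    rw [lniterArg_succ, Finset.prod_range_succ, mul_inv, ← div_eq_mul_inv]
    exact ((hasDerivAt_lniterArg hx p).const_add 1).log
      (by linarith [lniterArg_pos hx p])

lemma mul_prod_lniter (x : ℝ) (n : ℕ) :
    x * ∏ p ∈ Finset.range (n + 1), lniter p x = ∏ p ∈ Finset.range (n + 1), lniterArg p x := by
  rw [Finset.prod_range_succ', Finset.prod_range_succ']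
  show x * ((∏ p ∈ Finset.range n, lniter (p + 1) x) * 1) =
    (∏ p ∈ Finset.range n, lniter (p + 1) x) * x
  ring

lemma one_add_le_div_mul {δ x : ℝ} (hδ : 0 < δ) (h : δ ≤ x) : 1 + x ≤ (1 + δ) / δ * x := by
  rw [div_mul_eq_mul_div, le_div_iff₀ hδ]
  nlinarith

lemma prod_one_add_lniterArg_le {a x : ℝ} (ha : 0 < a) (hax : a ≤ x) (n : ℕ) :
    ∏ q ∈ Finset.range n, (1 + lniterArg q x) ≤
      (∏ q ∈ Finset.range n, (1 + lniterArg q a) / lniterArg q a) *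
        ∏ q ∈ Finset.range n, lniterArg q x := by
  rw [← Finset.prod_mul_distrib]
  exact Finset.prod_le_prod (fun q _ => by linarith [lniterArg_pos (ha.trans_le hax) q])
    fun q _ => one_add_le_div_mul (lniterArg_pos ha q) (lniterArg_mono ha hax q)

noncomputable def logWeight (l : ℕ) (r x : ℝ) : ℝ :=
  lniter (l + 1) x ^ r * ∏ p ∈ Finset.range (l + 1), lniter p x

lemma omegaWeight_eq_logWeight (l : ℕ) (r x : ℝ) :
    omegaWeight l r x = logWeight l r (Real.sqrt (x ^ 2 + 1)) := rfl

lemma logWeight_pos (l : ℕ) (r : ℝ) {x : ℝ} (hx : 0 < x) : 0 < logWeight l r x :=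
  mul_pos (Real.rpow_pos_of_pos (lniter_pos hx _) r)
    (Finset.prod_pos fun p _ => lniter_pos hx p)

lemma logWeight_mono (l : ℕ) {r x y : ℝ} (hr : 0 ≤ r) (hx : 0 < x) (hxy : x ≤ y) :
    logWeight l r x ≤ logWeight l r y := by
  have hy := hx.trans_le hxy
  exact mul_le_mul (Real.rpow_le_rpow (lniter_pos hx _).le (lniter_mono hx hxy _) hr)
    (Finset.prod_le_prod (fun p _ => (lniter_pos hx p).le) fun p _ => lniter_mono hx hxy p)
    (Finset.prod_nonneg fun p _ => (lniter_pos hx p).le) (Real.rpow_nonneg (lniter_pos hy _).le r)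

noncomputable def logWeightMajorant (l : ℕ) (r x : ℝ) : ℝ :=
  lniter (l + 1) x ^ (-r) * (∏ q ∈ Finset.range (l + 1), (1 + lniterArg q x))⁻¹

lemma integrableOn_Ioi_logWeightMajorant (l : ℕ) {r a : ℝ} (hr : 1 < r) (ha : 0 < a) :
    IntegrableOn (logWeightMajorant l r) (Ioi a) :=
  integrableOn_Ioi_rpow_neg_mul_deriv hr
    (fun x hx => hasDerivAt_lniterArg (ha.trans_le hx) (l + 1))
    (fun x hx => lniter_pos (ha.trans_le hx) (l + 1))
    (fun x hx => inv_nonneg.2 (Finset.prod_nonneg fun q _ =>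
      by linarith [lniterArg_pos (ha.trans hx) q]))
    (tendsto_lniterArg_atTop (l + 1))

lemma inv_mul_logWeight_le (l : ℕ) (r : ℝ) {a x : ℝ} (ha : 0 < a) (hax : a ≤ x) :
    (x * logWeight l r x)⁻¹ ≤
      (∏ q ∈ Finset.range (l + 1), (1 + lniterArg q a) / lniterArg q a) *
        logWeightMajorant l r x := by
  have hx := ha.trans_le hax
  have hP : 0 < ∏ q ∈ Finset.range (l + 1), lniterArg q x :=
    Finset.prod_pos fun q _ => lniterArg_pos hx q
  have hP' : 0 < ∏ q ∈ Finset.range (l + 1), (1 + lniterArg q x) :=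
    Finset.prod_pos fun q _ => by linarith [lniterArg_pos hx q]
  have hcmp := prod_one_add_lniterArg_le ha hax (l + 1)
  rw [logWeight, mul_left_comm, mul_prod_lniter, logWeightMajorant, mul_inv,
    ← Real.rpow_neg (lniter_pos hx _).le, mul_left_comm]
  gcongr
  · exact Real.rpow_nonneg (lniter_pos hx _).le _
  rw [inv_le_iff_one_le_mul₀ hP, ← div_eq_mul_inv, div_mul_eq_mul_div, one_le_div hP']
  exact hcmp

lemma iSup_window_le {l : ℕ} {r C t : ℝ} (hr : 0 ≤ r) (hC : 0 ≤ C) (ht : 0 < t) {a : ℤ → ℝ}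
    (hbound : ∀ n : ℤ, n ≠ 0 → a n ≤ C / (|(n : ℝ)| * omegaWeight l r (n : ℝ))) :
    ⨆ n ∈ {n : ℤ | t < |(n : ℝ)| ∧ |(n : ℝ)| < 2 * t}, a n ≤ C / (t * logWeight l r t) := by
  have hbound_nonneg : 0 ≤ C / (t * logWeight l r t) :=
    div_nonneg hC (mul_pos ht (logWeight_pos l r ht)).le
  refine Real.iSup_le (fun n => Real.iSup_le (fun ⟨htn, _⟩ => ?_) hbound_nonneg) hbound_nonneg
  have hn : n ≠ 0 := by
    rintro rfl
    simp only [Int.cast_zero, abs_zero] at htn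
    linarith
  have hsqrt : |(n : ℝ)| ≤ Real.sqrt ((n : ℝ) ^ 2 + 1) := by
    rw [← Real.sqrt_sq_eq_abs]
    exact Real.sqrt_le_sqrt (by linarith)
  refine (hbound n hn).trans (div_le_div_of_nonneg_left hC (mul_pos ht (logWeight_pos l r ht)) ?_)
  rw [omegaWeight_eq_logWeight]
  exact mul_le_mul htn.le (logWeight_mono l hr ht (htn.le.trans hsqrt))
    (logWeight_pos l r ht).le (abs_nonneg _)

theorem integral_sup_window_finite_of_log_decay_general
    (l : ℕ) (r : ℝ) (hr : 1 < r) (C : ℝ) (hC : 0 < C)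
    (a : ℤ → ℝ)
    (hbound : ∀ n : ℤ, n ≠ 0 → a n ≤ C / (|(n : ℝ)| * omegaWeight l r (n : ℝ))) :
    ∫⁻ t in Set.Ici (1 : ℝ),
        ENNReal.ofReal (⨆ n ∈ {n : ℤ | t < |(n : ℝ)| ∧ |(n : ℝ)| < 2 * t}, a n) < ⊤ := by
  set K := ∏ q ∈ Finset.range (l + 1), (1 + lniterArg q 1) / lniterArg q 1
  have hint : IntegrableOn (fun t => C * K * logWeightMajorant l r t) (Ici 1) := by
    rw [integrableOn_Ici_iff_integrableOn_Ioi]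
    exact (integrableOn_Ioi_logWeightMajorant l hr one_pos).const_mul _
  refine lt_of_le_of_lt (setLIntegral_mono' measurableSet_Ici fun t ht =>
    ENNReal.ofReal_le_ofReal ?_) hint.lintegral_lt_top
  have ht : (1 : ℝ) ≤ t := ht
  calc _ ≤ C / (t * logWeight l r t) := iSup_window_le (by linarith) hC.le (by linarith) hbound
    _ = C * (t * logWeight l r t)⁻¹ := div_eq_mul_inv _ _
    _ ≤ C * (K * logWeightMajorant l r t) :=
      mul_le_mul_of_nonneg_left (inv_mul_logWeight_le l r one_pos ht) hC.le
    _ = C * K * logWeightMajorant l r t := (mul_assoc _ _ _).symm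

/-- If `a_n ≤ C/(|n|·ω_l^r(n))` for all `n ≠ 0`, with `r > 1`, then
`∫_1^∞ sup{a_n : t < |n| < 2t} dt < ∞`. The supremum over the empty set is `0`. -/
theorem integral_sup_window_finite_of_log_decay
    (l : ℕ) (r : ℝ) (hr : 1 < r) (C : ℝ) (hC : 0 < C)
    (a : ℤ → ℝ) (ha : ∀ n, 0 ≤ a n)
    (hbound : ∀ n : ℤ, n ≠ 0 → a n ≤ C / (|(n : ℝ)| * omegaWeight l r (n : ℝ))) :
    ∫⁻ t in Set.Ici (1 : ℝ),
        ENNReal.ofReal (⨆ n ∈ {n : ℤ | t < |(n : ℝ)| ∧ |(n : ℝ)| < 2 * t}, a n) < ⊤ :=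
  integral_sup_window_finite_of_log_decay_general l r hr C hC a hbound
end

section
/- Let α ∈ ℝ and let a, b be nonzero complex numbers. For every u ∈ ℓ²(ℤ;ℂ²): P(H₀(P^⊥u)) = b·u₁(−1)·e₀⁺, where e₀⁺ ∈ ℓ²(ℤ;ℂ²) is the sequence whose first component is 0 and whose second component is the indicator of {0}; and P^⊥(H₀(Pu)) = conj(b)·u₂(0)·e₋₁⁻, where e₋₁⁻ ∈ ℓ²(ℤ;ℂ²) is the sequence whose first component is the indicator of {−1} and whose second component is 0. In particular, the bounded operators P∘H₀∘P^⊥ and P^⊥∘H₀∘P each have rank at most one. -/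
/-!
`H₀` couples the site `n` only to its neighbours, and the only couplings between `n = -1` and
`n = 0` are the hopping terms `conj(b)·u₂(n+1)` and `b·u₁(n-1)`. Hence `P H₀ P^⊥ u` only sees
`u₁(-1)` and lives on the second component at `0`, while `P^⊥ H₀ P u` only sees `u₂(0)` and lives
on the first component at `-1`: both blocks map into a fixed line, so have rank at most one.
-/

open scoped ENNReal

theorem LinearMap.rank_le_one_of_forall_exists_smul {K V W : Type*} [Ring K]
    [StrongRankCondition K] [AddCommGroup V] [Module K V] [AddCommGroup W] [Module K W]
    (f : V →ₗ[K] W) (v : W) (h : ∀ x, ∃ c : K, f x = c • v) : f.rank ≤ 1 := by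
  have hrange : LinearMap.range f ≤ Submodule.span K {v} := by
    rintro _ ⟨x, rfl⟩
    obtain ⟨c, hc⟩ := h x
    exact hc ▸ Submodule.smul_mem _ c (Submodule.mem_span_singleton_self v)
  calc f.rank ≤ Module.rank K (Submodule.span K {v}) := Submodule.rank_mono hrange
    _ ≤ 1 := by simpa using rank_span_le (R := K) ({v} : Set W)

theorem lp.eq_smul_single_single {ι σ 𝕜 : Type*} [DecidableEq ι] [DecidableEq σ] [Fintype σ]
    [RCLike 𝕜] {p : ℝ≥0∞} [Fact (1 ≤ p)] {w : lp (fun _ : ι => EuclideanSpace 𝕜 σ) p} {m : ι}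
    {j : σ} {c : 𝕜} (h : ∀ n i, w n i = if n = m ∧ i = j then c else 0) :
    w = c • lp.single p m (EuclideanSpace.single j 1) := by
  ext n i
  rw [h]
  by_cases hn : n = m <;> simp [hn]

local notation "𝓗" => lp (fun _ : ℤ => EuclideanSpace ℂ (Fin 2)) 2

def IsHalfLineProj (P : 𝓗 →L[ℂ] 𝓗) : Prop :=
  ∀ (u : 𝓗) (n : ℤ) (i : Fin 2), P u n i = if 0 ≤ n then u n i else 0

def IsFreeDiffOp (α : ℝ) (a b : ℂ) (H₀ : 𝓗 →L[ℂ] 𝓗) : Prop :=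
  ∀ (u : 𝓗) (n : ℤ),
    H₀ u n 0 = (α : ℂ) * u n 0 + (starRingEnd ℂ) a * u n 1 + (starRingEnd ℂ) b * u (n + 1) 1 ∧
    H₀ u n 1 = a * u n 0 + b * u (n - 1) 0 - (α : ℂ) * u n 1

namespace IsHalfLineProj

variable {P H₀ : 𝓗 →L[ℂ] 𝓗} {α : ℝ} {a b : ℂ}

theorem compl_apply (hP : IsHalfLineProj P) (u : 𝓗) (n : ℤ) (i : Fin 2) :
    (1 - P) u n i = if 0 ≤ n then 0 else u n i := by
  change u n i - P u n i = _
  rw [hP]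
  split_ifs <;> simp

theorem apply_H₀_compl (hP : IsHalfLineProj P) (hH₀ : IsFreeDiffOp α a b H₀) (u : 𝓗) (n : ℤ)
    (i : Fin 2) : P (H₀ ((1 - P) u)) n i = if n = 0 ∧ i = 1 then b * u (-1) 0 else 0 := by
  revert i
  refine Fin.forall_fin_two.2 ⟨?_, ?_⟩ <;>
    simp +decide only [hP _ _, (hH₀ _ n).1, (hH₀ _ n).2, hP.compl_apply, and_true, and_false] <;>
    split_ifs <;> first | omega | simp_all

theorem compl_apply_H₀ (hP : IsHalfLineProj P) (hH₀ : IsFreeDiffOp α a b H₀) (u : 𝓗) (n : ℤ)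
    (i : Fin 2) :
    (1 - P) (H₀ (P u)) n i = if n = -1 ∧ i = 0 then starRingEnd ℂ b * u 0 1 else 0 := by
  revert i
  refine Fin.forall_fin_two.2 ⟨?_, ?_⟩ <;>
    simp +decide only [hP _ _, (hH₀ _ n).1, (hH₀ _ n).2, hP.compl_apply, and_true, and_false] <;>
    split_ifs <;> first | omega | simp_all

end IsHalfLineProj

theorem P_H0_Pperp_rank_one_general (α : ℝ) (a b : ℂ)
    (H₀ : lp (fun _ : ℤ => EuclideanSpace ℂ (Fin 2)) 2 →L[ℂ]
          lp (fun _ : ℤ => EuclideanSpace ℂ (Fin 2)) 2)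
    (hH₀ : ∀ (u : lp (fun _ : ℤ => EuclideanSpace ℂ (Fin 2)) 2) (n : ℤ),
      H₀ u n 0 = (α : ℂ) * u n 0 + (starRingEnd ℂ) a * u n 1
          + (starRingEnd ℂ) b * u (n + 1) 1 ∧
      H₀ u n 1 = a * u n 0 + b * u (n - 1) 0 - (α : ℂ) * u n 1)
    (P : lp (fun _ : ℤ => EuclideanSpace ℂ (Fin 2)) 2 →L[ℂ]
         lp (fun _ : ℤ => EuclideanSpace ℂ (Fin 2)) 2)
    (hP : ∀ (u : lp (fun _ : ℤ => EuclideanSpace ℂ (Fin 2)) 2) (n : ℤ) (i : Fin 2),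
      P u n i = if 0 ≤ n then u n i else 0) :
    (∀ (u : lp (fun _ : ℤ => EuclideanSpace ℂ (Fin 2)) 2) (n : ℤ),
      (P (H₀ ((1 - P) u)) n 0 = 0 ∧
        P (H₀ ((1 - P) u)) n 1 = if n = 0 then b * u (-1) 0 else 0) ∧
      ((1 - P) (H₀ (P u)) n 0 = (if n = -1 then (starRingEnd ℂ) b * u 0 1 else 0) ∧
        (1 - P) (H₀ (P u)) n 1 = 0)) ∧
    LinearMap.rank ((P ∘L H₀ ∘L (1 - P)) :
      lp (fun _ : ℤ => EuclideanSpace ℂ (Fin 2)) 2 →ₗ[ℂ]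
      lp (fun _ : ℤ => EuclideanSpace ℂ (Fin 2)) 2) ≤ 1 ∧
    LinearMap.rank (((1 - P) ∘L H₀ ∘L P) :
      lp (fun _ : ℤ => EuclideanSpace ℂ (Fin 2)) 2 →ₗ[ℂ]
      lp (fun _ : ℤ => EuclideanSpace ℂ (Fin 2)) 2) ≤ 1 := by
  have hPHQ := IsHalfLineProj.apply_H₀_compl hP hH₀
  have hQHP := IsHalfLineProj.compl_apply_H₀ hP hH₀
  refine ⟨fun u n => ⟨⟨?_, ?_⟩, ?_, ?_⟩, ?_, ?_⟩
  · simpa using hPHQ u n 0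
  · simpa using hPHQ u n 1
  · simpa using hQHP u n 0
  · simpa using hQHP u n 1
  · exact LinearMap.rank_le_one_of_forall_exists_smul _ _
      fun u => ⟨_, lp.eq_smul_single_single (hPHQ u)⟩
  · exact LinearMap.rank_le_one_of_forall_exists_smul _ _
      fun u => ⟨_, lp.eq_smul_single_single (hQHP u)⟩

/-- With `P` the orthogonal projection of `ℓ²(ℤ;ℂ²)` onto sequences
supported in `ℤ₊` and `P^⊥ = 1 − P`, the operators `P∘H₀∘P^⊥` and `P^⊥∘H₀∘P` are
explicit rank-one expressions: `P(H₀(P^⊥u)) = b·u₁(−1)·e₀⁺` and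
`P^⊥(H₀(Pu)) = conj(b)·u₂(0)·e₋₁⁻` (stated componentwise), and in particular both
operators have rank at most one. -/
theorem P_H0_Pperp_rank_one (α : ℝ) (a b : ℂ) (ha : a ≠ 0) (hb : b ≠ 0)
    (H₀ : lp (fun _ : ℤ => EuclideanSpace ℂ (Fin 2)) 2 →L[ℂ]
          lp (fun _ : ℤ => EuclideanSpace ℂ (Fin 2)) 2)
    (hH₀ : ∀ (u : lp (fun _ : ℤ => EuclideanSpace ℂ (Fin 2)) 2) (n : ℤ),
      H₀ u n 0 = (α : ℂ) * u n 0 + (starRingEnd ℂ) a * u n 1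
          + (starRingEnd ℂ) b * u (n + 1) 1 ∧
      H₀ u n 1 = a * u n 0 + b * u (n - 1) 0 - (α : ℂ) * u n 1)
    (P : lp (fun _ : ℤ => EuclideanSpace ℂ (Fin 2)) 2 →L[ℂ]
         lp (fun _ : ℤ => EuclideanSpace ℂ (Fin 2)) 2)
    (hP : ∀ (u : lp (fun _ : ℤ => EuclideanSpace ℂ (Fin 2)) 2) (n : ℤ) (i : Fin 2),
      P u n i = if 0 ≤ n then u n i else 0) :
    (∀ (u : lp (fun _ : ℤ => EuclideanSpace ℂ (Fin 2)) 2) (n : ℤ),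
      (P (H₀ ((1 - P) u)) n 0 = 0 ∧
        P (H₀ ((1 - P) u)) n 1 = if n = 0 then b * u (-1) 0 else 0) ∧
      ((1 - P) (H₀ (P u)) n 0 = (if n = -1 then (starRingEnd ℂ) b * u 0 1 else 0) ∧
        (1 - P) (H₀ (P u)) n 1 = 0)) ∧
    LinearMap.rank ((P ∘L H₀ ∘L (1 - P)) :
      lp (fun _ : ℤ => EuclideanSpace ℂ (Fin 2)) 2 →ₗ[ℂ]
      lp (fun _ : ℤ => EuclideanSpace ℂ (Fin 2)) 2) ≤ 1 ∧
    LinearMap.rank (((1 - P) ∘L H₀ ∘L P) :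
      lp (fun _ : ℤ => EuclideanSpace ℂ (Fin 2)) 2 →ₗ[ℂ]
      lp (fun _ : ℤ => EuclideanSpace ℂ (Fin 2)) 2) ≤ 1 :=
  P_H0_Pperp_rank_one_general α a b H₀ hH₀ P hP
end

section
/- Let α ∈ ℝ and let a, b be nonzero complex numbers. For every continuous function Φ : ℝ → ℂ with compact support: (i) the operator Φ(H₀⁺) − ι*∘Φ(H₀)∘ι on ℓ²(ℤ₊;ℂ²) is compact, and (ii) the operators P∘Φ(H₀)∘P^⊥ and P^⊥∘Φ(H₀)∘P on ℓ²(ℤ;ℂ²) are compact; here Φ(T) denotes the continuous functional calculus of the bounded self-adjoint operator T applied to Φ. -/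
/-!
The extension by zero `ι` intertwines `H₀⁺` and `H₀` up to a rank-one operator: `H₀ ι - ι H₀⁺` and
`H₀⁺ ι* - ι* H₀` only see the hopping amplitude `b` across the bond between the sites `-1` and `0`.
Intertwining modulo compact operators passes to polynomials in the operators, and from there to
`Φ(H₀)` and `Φ(H₀⁺)`: the compact operators are norm closed, `‖f(T)‖ ≤ sup_{σ(T)} |f|`, and
polynomials are uniformly dense on a compact real interval containing both (real) spectra.
Since `ι* ι = 1`, each of the three operators of the statement is a product of bounded operators
with one of the commutators `Φ(H₀) ι - ι Φ(H₀⁺)` and `Φ(H₀⁺) ι* - ι* Φ(H₀)`.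
-/

open Complex Polynomial Set

theorem isCompactOperator_aeval_comp_sub_comp_aeval {𝕜 E F : Type*} [NontriviallyNormedField 𝕜]
    [NormedAddCommGroup E] [NormedSpace 𝕜 E] [NormedAddCommGroup F] [NormedSpace 𝕜 F]
    {A : E →L[𝕜] E} {B : F →L[𝕜] F} {J : F →L[𝕜] E}
    (hJ : IsCompactOperator (A ∘L J - J ∘L B)) (p : 𝕜[X]) :
    IsCompactOperator (aeval A p ∘L J - J ∘L aeval B p) := by
  induction p using Polynomial.induction_on with
  | C c =>
    have : aeval A (C c) ∘L J - J ∘L aeval B (C c) = 0 := by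
      ext x; simp [Algebra.algebraMap_eq_smul_one]
    rw [this]
    exact isCompactOperator_zero
  | add p q hp hq =>
    rw [map_add, map_add, ContinuousLinearMap.add_comp, ContinuousLinearMap.comp_add,
      add_sub_add_comm]
    exact hp.add hq
  | monomial n c ih =>
    set P := aeval A (C c * X ^ n)
    set Q := aeval B (C c * X ^ n)
    have hmul : aeval A (C c * X ^ (n + 1)) ∘L J - J ∘L aeval B (C c * X ^ (n + 1))
        = P ∘L (A ∘L J - J ∘L B) + (P ∘L J - J ∘L Q) ∘L B := by
      simp only [pow_succ, ← mul_assoc, map_mul, aeval_X, P, Q]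
      ext x; simp
    rw [hmul]
    exact (hJ.clm_comp P).add (ih.comp_clm B)

theorem Complex.exists_polynomial_near_of_continuousOn (a b : ℝ) {f : ℝ → ℂ}
    (hf : ContinuousOn f (Icc a b)) {ε : ℝ} (hε : 0 < ε) :
    ∃ q : ℂ[X], ∀ x ∈ Icc a b, ‖f x - q.eval (x : ℂ)‖ < ε := by
  obtain ⟨p, hp⟩ := _root_.exists_polynomial_near_of_continuousOn a b (fun x => (f x).re)
    (continuous_re.comp_continuousOn hf) (ε / 2) (half_pos hε)
  obtain ⟨r, hr⟩ := _root_.exists_polynomial_near_of_continuousOn a b (fun x => (f x).im)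
    (continuous_im.comp_continuousOn hf) (ε / 2) (half_pos hε)
  refine ⟨p.map ofRealHom + C I * r.map ofRealHom, fun x hx => ?_⟩
  have hcast (s : ℝ[X]) : (s.map ofRealHom).eval (x : ℂ) = s.eval x := by
    rw [eval_map]; exact eval₂_at_apply ofRealHom x
  have hre := hp x hx
  have him := hr x hx
  rw [abs_sub_comm] at hre him
  calc ‖f x - (p.map ofRealHom + C I * r.map ofRealHom).eval (x : ℂ)‖
      ≤ |(f x).re - p.eval x| + |(f x).im - r.eval x| := by
        refine (norm_le_abs_re_add_abs_im _).trans_eq ?_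
        simp [hcast]
    _ < ε / 2 + ε / 2 := add_lt_add hre him
    _ = ε := add_halves ε

theorem IsSelfAdjoint.norm_cfc_sub_aeval_le {A : Type*} [CStarAlgebra A] {a : A}
    (ha : IsSelfAdjoint a) {g : ℂ → ℂ} (hg : ContinuousOn g (spectrum ℂ a)) {q : ℂ[X]} {M δ : ℝ}
    (hM : spectrum ℂ a ⊆ Metric.closedBall 0 M) (hδ : 0 ≤ δ)
    (hq : ∀ x ∈ Icc (-M) M, ‖g x - q.eval (x : ℂ)‖ ≤ δ) :
    ‖cfc g a - aeval a q‖ ≤ δ := by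
  rw [← cfc_polynomial q a, ← cfc_sub g _ a]
  refine norm_cfc_le hδ fun z hz => ?_
  have hzM : |z.re| ≤ M := (abs_re_le_norm z).trans (mem_closedBall_zero_iff.mp (hM hz))
  rw [ha.mem_spectrum_eq_re hz]
  exact hq z.re (abs_le.mp hzM)

theorem IsSelfAdjoint.isCompactOperator_cfc_comp_sub_comp_cfc {E F : Type*}
    [NormedAddCommGroup E] [InnerProductSpace ℂ E] [CompleteSpace E]
    [NormedAddCommGroup F] [InnerProductSpace ℂ F] [CompleteSpace F]
    {A : E →L[ℂ] E} {B : F →L[ℂ] F} (hA : IsSelfAdjoint A) (hB : IsSelfAdjoint B)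
    {J : F →L[ℂ] E} (hJ : IsCompactOperator (A ∘L J - J ∘L B)) {g : ℂ → ℂ}
    (hg : Continuous g) :
    IsCompactOperator (cfc g A ∘L J - J ∘L cfc g B) := by
  obtain ⟨M, hM⟩ := ((spectrum.isCompact (𝕜 := ℂ) A).union
    (spectrum.isCompact (𝕜 := ℂ) B)).isBounded.subset_closedBall 0
  suffices cfc g A ∘L J - J ∘L cfc g B ∈ closure {K : F →L[ℂ] E | IsCompactOperator K} by
    rwa [isClosed_setOfPred_isCompactOperator.closure_eq] at this
  refine Metric.mem_closure_iff.mpr fun ε hε => ?_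
  set δ := ε / (2 * ‖J‖ + 1)
  have hδ : 0 < δ := by positivity
  have hδε : δ * (2 * ‖J‖ + 1) = ε := div_mul_cancel₀ _ (by positivity)
  obtain ⟨q, hq⟩ := Complex.exists_polynomial_near_of_continuousOn (-M) M
    (hg.comp continuous_ofReal).continuousOn hδ
  refine ⟨aeval A q ∘L J - J ∘L aeval B q, isCompactOperator_aeval_comp_sub_comp_aeval hJ q, ?_⟩
  have hAq := hA.norm_cfc_sub_aeval_le hg.continuousOn (subset_union_left.trans hM) hδ.le
    fun x hx => (hq x hx).le
  have hBq := hB.norm_cfc_sub_aeval_le hg.continuousOn (subset_union_right.trans hM) hδ.le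
    fun x hx => (hq x hx).le
  rw [dist_eq_norm]
  calc ‖(cfc g A ∘L J - J ∘L cfc g B) - (aeval A q ∘L J - J ∘L aeval B q)‖
      = ‖(cfc g A - aeval A q) ∘L J - J ∘L (cfc g B - aeval B q)‖ := by
        rw [ContinuousLinearMap.sub_comp, ContinuousLinearMap.comp_sub, sub_sub_sub_comm]
    _ ≤ ‖cfc g A - aeval A q‖ * ‖J‖ + ‖J‖ * ‖cfc g B - aeval B q‖ :=
        (norm_sub_le _ _).trans (add_le_add (ContinuousLinearMap.opNorm_comp_le _ _)
          (ContinuousLinearMap.opNorm_comp_le _ _))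
    _ ≤ δ * ‖J‖ + ‖J‖ * δ := by gcongr
    _ = ε - δ := by rw [← hδε]; ring
    _ < ε := sub_lt_self ε hδ

theorem ContinuousLinearMap.isCompactOperator_smulRight {𝕜 X Y : Type*}
    [NontriviallyNormedField 𝕜] [LocallyCompactSpace 𝕜]
    [NormedAddCommGroup X] [NormedSpace 𝕜 X] [NormedAddCommGroup Y] [NormedSpace 𝕜 Y]
    (φ : X →L[𝕜] 𝕜) (e : Y) : IsCompactOperator (φ.smulRight e) :=
  (isCompactOperator_of_locallyCompactSpace_rng (toSpanSingleton 𝕜 e)).comp_clm φ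

section Compression

variable {𝕜 E F : Type*} [NontriviallyNormedField 𝕜] [NormedAddCommGroup E] [NormedSpace 𝕜 E]
  [NormedAddCommGroup F] [NormedSpace 𝕜 F] {J : F →L[𝕜] E} {K : E →L[𝕜] F}
  {S : E →L[𝕜] E} {T : F →L[𝕜] F}

theorem isCompactOperator_sub_comp_comp_of_comp_eq_one (hKJ : K ∘L J = 1)
    (hS : IsCompactOperator (S ∘L J - J ∘L T)) : IsCompactOperator (T - K ∘L S ∘L J) := by
  have : T - K ∘L S ∘L J = -(K ∘L (S ∘L J - J ∘L T)) := by
    ext x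
    simp [← ContinuousLinearMap.comp_apply K J, hKJ]
  rw [this]
  exact (hS.clm_comp K).neg

theorem isCompactOperator_comp_comp_one_sub_of_comp_eq_one (hKJ : K ∘L J = 1)
    (hT : IsCompactOperator (T ∘L K - K ∘L S)) :
    IsCompactOperator ((J ∘L K) ∘L S ∘L (1 - J ∘L K)) := by
  have : (J ∘L K) ∘L S ∘L (1 - J ∘L K) = -(J ∘L (T ∘L K - K ∘L S) ∘L (1 - J ∘L K)) := by
    ext x
    simp [← ContinuousLinearMap.comp_apply K J, hKJ]
  rw [this]
  exact ((hT.comp_clm _).clm_comp J).neg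

theorem isCompactOperator_one_sub_comp_comp_of_comp_eq_one (hKJ : K ∘L J = 1)
    (hS : IsCompactOperator (S ∘L J - J ∘L T)) :
    IsCompactOperator ((1 - J ∘L K) ∘L S ∘L (J ∘L K)) := by
  have : (1 - J ∘L K) ∘L S ∘L (J ∘L K) = (1 - J ∘L K) ∘L (S ∘L J - J ∘L T) ∘L K := by
    ext x
    simp [← ContinuousLinearMap.comp_apply K J, hKJ]
  rw [this]
  exact (hS.comp_clm K).clm_comp (1 - J ∘L K)

end Compression

local notation "ℓ²ℤ" => lp (fun _ : ℤ => EuclideanSpace ℂ (Fin 2)) 2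
local notation "ℓ²ℕ" => lp (fun _ : ℕ => EuclideanSpace ℂ (Fin 2)) 2

def IsBulkOperator (α : ℝ) (a b : ℂ) (H : ℓ²ℤ →L[ℂ] ℓ²ℤ) : Prop :=
  ∀ (u : ℓ²ℤ) (n : ℤ),
    H u n 0 = (α : ℂ) * u n 0 + (starRingEnd ℂ) a * u n 1 + (starRingEnd ℂ) b * u (n + 1) 1 ∧
    H u n 1 = a * u n 0 + b * u (n - 1) 0 - (α : ℂ) * u n 1

def IsHalfLineOperator (α : ℝ) (a b : ℂ) (H : ℓ²ℕ →L[ℂ] ℓ²ℕ) : Prop :=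
  ∀ (u : ℓ²ℕ) (n : ℕ),
    H u n 0 = (α : ℂ) * u n 0 + (starRingEnd ℂ) a * u n 1 + (starRingEnd ℂ) b * u (n + 1) 1 ∧
    H u n 1 = a * u n 0 + (if n = 0 then 0 else b * u (n - 1) 0) - (α : ℂ) * u n 1

section HalfLine

variable {α : ℝ} {a b : ℂ} {H₀ : ℓ²ℤ →L[ℂ] ℓ²ℤ} {H₀p : ℓ²ℕ →L[ℂ] ℓ²ℕ} {ι : ℓ²ℕ →L[ℂ] ℓ²ℤ}
  {ιs : ℓ²ℤ →L[ℂ] ℓ²ℕ}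

theorem restriction_comp_extension_eq_one
    (hι : ∀ (u : ℓ²ℕ) (n : ℤ) (i : Fin 2), ι u n i = if 0 ≤ n then u n.toNat i else 0)
    (hιs : ∀ (v : ℓ²ℤ) (m : ℕ) (i : Fin 2), ιs v m i = v (m : ℤ) i) :
    ιs ∘L ι = 1 := by
  ext u m i
  simp [hιs, hι]

theorem IsBulkOperator.comp_sub_comp_halfLine_eq (hH₀ : IsBulkOperator α a b H₀)
    (hH₀p : IsHalfLineOperator α a b H₀p)
    (hι : ∀ (u : ℓ²ℕ) (n : ℤ) (i : Fin 2), ι u n i = if 0 ≤ n then u n.toNat i else 0) :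
    H₀ ∘L ι - ι ∘L H₀p =
      (starRingEnd ℂ b • (EuclideanSpace.proj 1).comp (lp.evalCLM ℂ _ 2 0)).smulRight
        (lp.single 2 (-1 : ℤ) (EuclideanSpace.single (0 : Fin 2) (1 : ℂ))) := by
  have hιv : ∀ u n, ι u n = if 0 ≤ n then u n.toNat else 0 := by
    intro u n; ext i; rw [hι]; split_ifs <;> rfl
  ext u n i
  simp only [sub_apply, ContinuousLinearMap.comp_apply, smul_apply,
    ContinuousLinearMap.smulRight_apply, lp.coeFn_sub, lp.coeFn_smul, Pi.sub_apply,
    Pi.smul_apply, lp.single_apply, lp.evalCLM]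
  unfold IsBulkOperator at hH₀
  unfold IsHalfLineOperator at hH₀p
  rcases lt_trichotomy n (-1) with hn | rfl | hn
  · have h0 : ¬ 0 ≤ n := by omega
    have h1 : ¬ 0 ≤ n + 1 := by omega
    have h2 : ¬ 1 ≤ n := by omega
    fin_cases i <;> simp [hH₀, hιv, h0, h1, h2, hn.ne]
  · fin_cases i <;> simp [hH₀, hιv]
  · obtain ⟨m, rfl⟩ := Int.eq_ofNat_of_zero_le (show 0 ≤ n by omega)
    have hm : (m : ℤ) ≠ -1 := by omega
    have h1 : (0 : ℤ) ≤ m + 1 := by omega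
    fin_cases i
    · simp [hH₀, hH₀p, hιv, hm, h1]
    · rcases Nat.eq_zero_or_pos m with rfl | hm0
      · simp [hH₀, hH₀p, hιv]
      · simp [hH₀, hH₀p, hιv, hm, Nat.one_le_of_lt hm0, hm0.ne']

theorem IsHalfLineOperator.comp_sub_comp_bulk_eq (hH₀p : IsHalfLineOperator α a b H₀p)
    (hH₀ : IsBulkOperator α a b H₀)
    (hιs : ∀ (v : ℓ²ℤ) (m : ℕ) (i : Fin 2), ιs v m i = v (m : ℤ) i) :
    H₀p ∘L ιs - ιs ∘L H₀ =
      (-b • (EuclideanSpace.proj 0).comp (lp.evalCLM ℂ _ 2 (-1))).smulRight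
        (lp.single 2 (0 : ℕ) (EuclideanSpace.single (1 : Fin 2) (1 : ℂ))) := by
  have hιsv : ∀ v m, ιs v m = v m := fun v m => by ext i; exact hιs v m i
  ext v m i
  simp only [sub_apply, ContinuousLinearMap.comp_apply, smul_apply,
    ContinuousLinearMap.smulRight_apply, lp.coeFn_sub, lp.coeFn_smul, Pi.sub_apply,
    Pi.smul_apply, lp.single_apply, lp.evalCLM]
  unfold IsBulkOperator at hH₀
  unfold IsHalfLineOperator at hH₀p
  rcases Nat.eq_zero_or_pos m with rfl | hm
  · fin_cases i <;> simp [hH₀, hH₀p, hιsv]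
  · fin_cases i <;> simp [hH₀, hH₀p, hιsv, hm.ne', Nat.cast_pred hm]

end HalfLine

theorem compactness_functional_calculus_general (α : ℝ) (a b : ℂ)
    (H₀ : lp (fun _ : ℤ => EuclideanSpace ℂ (Fin 2)) 2 →L[ℂ]
          lp (fun _ : ℤ => EuclideanSpace ℂ (Fin 2)) 2)
    (hH₀ : ∀ (u : lp (fun _ : ℤ => EuclideanSpace ℂ (Fin 2)) 2) (n : ℤ),
      H₀ u n 0 = (α : ℂ) * u n 0 + (starRingEnd ℂ) a * u n 1
          + (starRingEnd ℂ) b * u (n + 1) 1 ∧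
      H₀ u n 1 = a * u n 0 + b * u (n - 1) 0 - (α : ℂ) * u n 1)
    (hH₀sa : IsSelfAdjoint H₀)
    (H₀p : lp (fun _ : ℕ => EuclideanSpace ℂ (Fin 2)) 2 →L[ℂ]
           lp (fun _ : ℕ => EuclideanSpace ℂ (Fin 2)) 2)
    (hH₀p : ∀ (u : lp (fun _ : ℕ => EuclideanSpace ℂ (Fin 2)) 2) (n : ℕ),
      H₀p u n 0 = (α : ℂ) * u n 0 + (starRingEnd ℂ) a * u n 1
          + (starRingEnd ℂ) b * u (n + 1) 1 ∧
      H₀p u n 1 = a * u n 0 + (if n = 0 then 0 else b * u (n - 1) 0)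
          - (α : ℂ) * u n 1)
    (hH₀psa : IsSelfAdjoint H₀p)
    (ι : lp (fun _ : ℕ => EuclideanSpace ℂ (Fin 2)) 2 →L[ℂ]
         lp (fun _ : ℤ => EuclideanSpace ℂ (Fin 2)) 2)
    (hι : ∀ (u : lp (fun _ : ℕ => EuclideanSpace ℂ (Fin 2)) 2) (n : ℤ) (i : Fin 2),
      ι u n i = if 0 ≤ n then u n.toNat i else 0)
    (ιs : lp (fun _ : ℤ => EuclideanSpace ℂ (Fin 2)) 2 →L[ℂ]
          lp (fun _ : ℕ => EuclideanSpace ℂ (Fin 2)) 2)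
    (hιs : ∀ (v : lp (fun _ : ℤ => EuclideanSpace ℂ (Fin 2)) 2) (m : ℕ) (i : Fin 2),
      ιs v m i = v (m : ℤ) i)
    (Φ : ℝ → ℂ) (hΦc : Continuous Φ) :
    IsCompactOperator
      (⇑(cfc (fun z : ℂ => Φ z.re) H₀p - ιs ∘L cfc (fun z : ℂ => Φ z.re) H₀ ∘L ι)) ∧
    IsCompactOperator
      (⇑((ι ∘L ιs) ∘L cfc (fun z : ℂ => Φ z.re) H₀ ∘L (1 - ι ∘L ιs))) ∧
    IsCompactOperator
      (⇑((1 - ι ∘L ιs) ∘L cfc (fun z : ℂ => Φ z.re) H₀ ∘L (ι ∘L ιs))) := by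
  have hΦ : Continuous fun z : ℂ => Φ z.re := hΦc.comp continuous_re
  have hK : IsCompactOperator (H₀ ∘L ι - ι ∘L H₀p) := by
    rw [IsBulkOperator.comp_sub_comp_halfLine_eq hH₀ hH₀p hι]
    exact ContinuousLinearMap.isCompactOperator_smulRight _ _
  have hKs : IsCompactOperator (H₀p ∘L ιs - ιs ∘L H₀) := by
    rw [IsHalfLineOperator.comp_sub_comp_bulk_eq hH₀p hH₀ hιs]
    exact ContinuousLinearMap.isCompactOperator_smulRight _ _
  have hΦK := hH₀sa.isCompactOperator_cfc_comp_sub_comp_cfc hH₀psa hK hΦ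
  have hΦKs := hH₀psa.isCompactOperator_cfc_comp_sub_comp_cfc hH₀sa hKs hΦ
  have hιsι := restriction_comp_extension_eq_one hι hιs
  exact ⟨isCompactOperator_sub_comp_comp_of_comp_eq_one hιsι hΦK,
    isCompactOperator_comp_comp_one_sub_of_comp_eq_one hιsι hΦKs,
    isCompactOperator_one_sub_comp_comp_of_comp_eq_one hιsι hΦK⟩

/-- For every continuous compactly supported `Φ : ℝ → ℂ`,
`Φ(H₀⁺) − ι*∘Φ(H₀)∘ι` is compact on `ℓ²(ℤ₊;ℂ²)`, and `P∘Φ(H₀)∘P^⊥`, `P^⊥∘Φ(H₀)∘P`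
are compact on `ℓ²(ℤ;ℂ²)`, where `P = ι∘ι*`. Here `Φ(T)` is the continuous functional
calculus of the self-adjoint operator `T`, realized as `cfc (fun z : ℂ => Φ z.re) T`
(which agrees with the usual definition since the spectrum of `T` is real). -/
theorem compactness_functional_calculus (α : ℝ) (a b : ℂ) (ha : a ≠ 0) (hb : b ≠ 0)
    (H₀ : lp (fun _ : ℤ => EuclideanSpace ℂ (Fin 2)) 2 →L[ℂ]
          lp (fun _ : ℤ => EuclideanSpace ℂ (Fin 2)) 2)
    (hH₀ : ∀ (u : lp (fun _ : ℤ => EuclideanSpace ℂ (Fin 2)) 2) (n : ℤ),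
      H₀ u n 0 = (α : ℂ) * u n 0 + (starRingEnd ℂ) a * u n 1
          + (starRingEnd ℂ) b * u (n + 1) 1 ∧
      H₀ u n 1 = a * u n 0 + b * u (n - 1) 0 - (α : ℂ) * u n 1)
    (hH₀sa : IsSelfAdjoint H₀)
    (H₀p : lp (fun _ : ℕ => EuclideanSpace ℂ (Fin 2)) 2 →L[ℂ]
           lp (fun _ : ℕ => EuclideanSpace ℂ (Fin 2)) 2)
    (hH₀p : ∀ (u : lp (fun _ : ℕ => EuclideanSpace ℂ (Fin 2)) 2) (n : ℕ),
      H₀p u n 0 = (α : ℂ) * u n 0 + (starRingEnd ℂ) a * u n 1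
          + (starRingEnd ℂ) b * u (n + 1) 1 ∧
      H₀p u n 1 = a * u n 0 + (if n = 0 then 0 else b * u (n - 1) 0)
          - (α : ℂ) * u n 1)
    (hH₀psa : IsSelfAdjoint H₀p)
    (ι : lp (fun _ : ℕ => EuclideanSpace ℂ (Fin 2)) 2 →L[ℂ]
         lp (fun _ : ℤ => EuclideanSpace ℂ (Fin 2)) 2)
    (hι : ∀ (u : lp (fun _ : ℕ => EuclideanSpace ℂ (Fin 2)) 2) (n : ℤ) (i : Fin 2),
      ι u n i = if 0 ≤ n then u n.toNat i else 0)
    (ιs : lp (fun _ : ℤ => EuclideanSpace ℂ (Fin 2)) 2 →L[ℂ]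
          lp (fun _ : ℕ => EuclideanSpace ℂ (Fin 2)) 2)
    (hιs : ∀ (v : lp (fun _ : ℤ => EuclideanSpace ℂ (Fin 2)) 2) (m : ℕ) (i : Fin 2),
      ιs v m i = v (m : ℤ) i)
    (Φ : ℝ → ℂ) (hΦc : Continuous Φ) (hΦsupp : HasCompactSupport Φ) :
    IsCompactOperator
      (⇑(cfc (fun z : ℂ => Φ z.re) H₀p - ιs ∘L cfc (fun z : ℂ => Φ z.re) H₀ ∘L ι)) ∧
    IsCompactOperator
      (⇑((ι ∘L ιs) ∘L cfc (fun z : ℂ => Φ z.re) H₀ ∘L (1 - ι ∘L ιs))) ∧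
    IsCompactOperator
      (⇑((1 - ι ∘L ιs) ∘L cfc (fun z : ℂ => Φ z.re) H₀ ∘L (ι ∘L ιs))) :=
  compactness_functional_calculus_general α a b H₀ hH₀ hH₀sa H₀p hH₀p hH₀psa ι hι ιs hιs Φ hΦc
end
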